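/- arXiv:1511.02544 — 8 statements merged into one kernel-verified Lean document; each statement's English description precedes it below -/
import Mathlib

section
/- In a graph G, a set of vertices X is a module if every vertex outside X is adjacent to all vertices of X or to none of them. Show that a graph G is prime (has no nontrivial modules) if and only if for every three pairwise distinct vertices x1, x2, x3, there exists a chain from {x1, x2} to x3. -/
variable {V : Type*}

def GraphModule (G : SimpleGraph V) (X : Set V) : Prop :=
  ∀ v ∉ X, (∀ x ∈ X, G.Adj v x) ∨ (∀ x ∈ X, ¬ G.Adj v x)

def IsPrimeGraph (G : SimpleGraph V) : Prop :=
  ∀ X : Set V, GraphModule G X → X.Subsingleton ∨ X = Set.univ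

structure GraphChain (G : SimpleGraph V) (I : Set V) (w : V) (m : ℕ)
    (v : Fin (m + 1) → V) : Prop where
  two_le : 2 ≤ m
  inj : Function.Injective v
  mem0 : v 0 ∈ I
  mem1 : v 1 ∈ I
  not_mem : ∀ i : Fin (m + 1), 2 ≤ (i : ℕ) → v i ∉ I
  last_eq : v (Fin.last m) = w
  uniq : ∀ i : Fin (m + 1), 0 < (i : ℕ) →
    (∀ j : Fin (m + 1), (j : ℕ) < (i : ℕ) → (G.Adj (v i) (v j) ↔ (j : ℕ) + 1 = (i : ℕ))) ∨
    (∀ j : Fin (m + 1), (j : ℕ) < (i : ℕ) → (¬ G.Adj (v i) (v j) ↔ (j : ℕ) + 1 = (i : ℕ)))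

def HasChain (G : SimpleGraph V) (I : Set V) (w : V) : Prop :=
  ∃ m v, GraphChain G I w m v

/-!
If a module `X` contains `v₀, v₁` of a chain, it contains every `vᵢ`: a vertex `vᵢ` outside `X`
would see `v₀` and `vᵢ₋₁` alike, while the chain makes it distinguish them. So chains cannot leave
a nontrivial module. Conversely, the vertices lying on chains from `{x, y}` that start at `x` form
a module: a vertex `u` outside it that distinguishes `x` from some chain vertex `sₐ` extends the
chain `s₀, …, sₙ`, where `sₙ` is the first chain vertex that `u` does not see like `s₀`. In a prime
graph this module, which contains `x ≠ y`, is everything.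
-/

theorem GraphModule.of_forall_adj_iff {G : SimpleGraph V} {X : Set V} (x : V)
    (h : ∀ u ∉ X, ∀ a ∈ X, G.Adj u a ↔ G.Adj u x) : GraphModule G X := by
  intro u hu
  by_cases hux : G.Adj u x
  · exact Or.inl fun a ha => (h u hu a ha).mpr hux
  · exact Or.inr fun a ha => mt (h u hu a ha).mp hux

theorem GraphModule.adj_iff {G : SimpleGraph V} {X : Set V} (hX : GraphModule G X) {u a b : V}
    (hu : u ∉ X) (ha : a ∈ X) (hb : b ∈ X) : G.Adj u a ↔ G.Adj u b := by
  rcases hX u hu with hall | hnone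
  · exact iff_of_true (hall a ha) (hall b hb)
  · exact iff_of_false (hnone a ha) (hnone b hb)

/-- `GraphChain` with `ℕ`-indexed vertices `s 0, …, s m` (later values are ignored), where also
`m = 1` is allowed: every chain starts as such a pair. -/
structure IsChainSeq (G : SimpleGraph V) (I : Set V) (m : ℕ) (s : ℕ → V) : Prop where
  injOn : Set.InjOn s (Set.Iic m)
  mem_zero : s 0 ∈ I
  mem_one : s 1 ∈ I
  not_mem : ∀ i, 2 ≤ i → i ≤ m → s i ∉ I
  uniq : ∀ i, 0 < i → i ≤ m →
    (∀ j < i, G.Adj (s i) (s j) ↔ j + 1 = i) ∨ (∀ j < i, ¬ G.Adj (s i) (s j) ↔ j + 1 = i)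

open Fin.NatCast in
theorem hasChain_iff {G : SimpleGraph V} {I : Set V} {w : V} :
    HasChain G I w ↔ ∃ m s, 2 ≤ m ∧ IsChainSeq G I m s ∧ s m = w := by
  constructor
  · rintro ⟨m, v, hc⟩
    have hval {i : ℕ} (hi : i ≤ m) : ((i : Fin (m + 1)) : ℕ) = i :=
      Fin.val_cast_of_lt (Nat.lt_succ_of_le hi)
    refine ⟨m, fun i => v i, hc.two_le, ⟨?_, ?_, ?_, ?_, ?_⟩, ?_⟩
    · intro i hi j hj hij
      simpa [hval hi, hval hj] using congrArg Fin.val (hc.inj hij)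
    · simpa using hc.mem0
    · simpa using hc.mem1
    · intro i hi2 him
      exact hc.not_mem i (by rwa [hval him])
    · intro i hi0 him
      refine (hc.uniq i (by rwa [hval him])).imp (fun h j hj => ?_) (fun h j hj => ?_) <;>
      · have hj' := hval (hj.le.trans him)
        simpa [hval him, hj'] using h j (by simpa [hval him, hj'])
    · simpa [Fin.natCast_eq_last] using hc.last_eq
  · rintro ⟨m, s, hm, hs, rfl⟩
    refine ⟨m, fun i => s i, hm, ?_, ?_, ?_, ?_, ?_, ?_⟩
    · intro i j hij
      exact Fin.ext (hs.injOn (Nat.le_of_lt_succ i.isLt) (Nat.le_of_lt_succ j.isLt) hij)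
    · simpa using hs.mem_zero
    · simpa [Fin.val_one', Nat.mod_eq_of_lt (by omega : 1 < m + 1)] using hs.mem_one
    · exact fun i hi => hs.not_mem i hi (Nat.le_of_lt_succ i.isLt)
    · simp
    · intro i hi
      exact (hs.uniq i hi (Nat.le_of_lt_succ i.isLt)).imp (fun h j hj => h j hj)
        (fun h j hj => h j hj)

namespace IsChainSeq

variable {G : SimpleGraph V} {I : Set V} {m : ℕ} {s : ℕ → V}

theorem pair {x y : V} (hx : x ∈ I) (hy : y ∈ I) (hxy : x ≠ y) :
    IsChainSeq G I 1 (fun n => if n = 0 then x else y) := by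
  refine ⟨?_, by simpa, by simpa, fun i hi2 hi1 => by omega, fun i hi0 hi1 => ?_⟩
  · intro i hi j hj hij
    simp only [Set.mem_Iic] at hi hj
    interval_cases i <;> interval_cases j <;> simp_all [eq_comm]
  · obtain rfl : i = 1 := by omega
    have hj {j : ℕ} (hj : j < 1) : j = 0 := by omega
    by_cases hyx : G.Adj y x
    · exact Or.inl fun j hj' => by simpa [hj hj'] using hyx
    · exact Or.inr fun j hj' => by simpa [hj hj'] using hyx

theorem mono (hs : IsChainSeq G I m s) {k : ℕ} (hk : k ≤ m) : IsChainSeq G I k s :=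
  ⟨hs.injOn.mono (Set.Iic_subset_Iic.mpr hk), hs.mem_zero, hs.mem_one,
    fun i hi2 hik => hs.not_mem i hi2 (hik.trans hk),
    fun i hi0 hik => hs.uniq i hi0 (hik.trans hk)⟩

theorem adj_zero_iff_not_adj_pred (hs : IsChainSeq G I m s) {i : ℕ} (hi2 : 2 ≤ i)
    (him : i ≤ m) :
    G.Adj (s i) (s 0) ↔ ¬ G.Adj (s i) (s (i - 1)) := by
  have h0 : ¬ 0 + 1 = i := by omega
  have hpred : i - 1 + 1 = i := by omega
  rcases hs.uniq i (by omega) him with h | h <;>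
  · have := h 0 (by omega); have := h (i - 1) (by omega); tauto

theorem mem_of_graphModule (hs : IsChainSeq G I m s) {X : Set V} (hX : GraphModule G X)
    (hI : I ⊆ X) : ∀ i ≤ m, s i ∈ X := by
  intro i
  induction i using Nat.strong_induction_on with
  | _ i ih =>
    intro him
    rcases Nat.lt_or_ge i 2 with hi | hi
    · interval_cases i
      exacts [hI hs.mem_zero, hI hs.mem_one]
    · by_contra hsi
      have hmod := hX.adj_iff hsi (ih 0 (by omega) (by omega)) (ih (i - 1) (by omega) (by omega))
      exact iff_not_self (hmod.symm.trans (hs.adj_zero_iff_not_adj_pred hi him))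

theorem update_succ (hs : IsChainSeq G I m s) {u : V} (hu : u ∉ I) (hus : ∀ i ≤ m, s i ≠ u)
    (hm : 1 ≤ m) (hbefore : ∀ j < m, G.Adj u (s j) ↔ G.Adj u (s 0))
    (hlast : ¬ (G.Adj u (s m) ↔ G.Adj u (s 0))) :
    IsChainSeq G I (m + 1) (Function.update s (m + 1) u) := by
  have hs' : ∀ i ≤ m, Function.update s (m + 1) u i = s i :=
    fun i hi => Function.update_of_ne (by omega) _ _
  have hu' : Function.update s (m + 1) u (m + 1) = u := Function.update_self _ _ _
  refine ⟨?_, ?_, ?_, fun i hi2 him => ?_, fun i hi0 him => ?_⟩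
  · intro i hi j hj hij
    simp only [Set.mem_Iic] at hi hj
    rcases Nat.lt_or_ge m i with hi' | hi' <;> rcases Nat.lt_or_ge m j with hj' | hj'
    · omega
    · rw [show i = m + 1 by omega, hu', hs' j hj'] at hij
      exact absurd hij.symm (hus j hj')
    · rw [show j = m + 1 by omega, hu', hs' i hi'] at hij
      exact absurd hij (hus i hi')
    · rw [hs' i hi', hs' j hj'] at hij
      exact hs.injOn hi' hj' hij
  · rw [hs' 0 (by omega)]; exact hs.mem_zero
  · rw [hs' 1 hm]; exact hs.mem_one
  · rcases Nat.lt_or_ge m i with hi | hi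
    · rwa [show i = m + 1 by omega, hu']
    · rw [hs' i hi]; exact hs.not_mem i hi2 hi
  · rcases Nat.lt_or_ge m i with hi | hi
    · obtain rfl : i = m + 1 := by omega
      have hold (j : ℕ) (hj : j < m + 1) :
          G.Adj u (Function.update s (m + 1) u j) ↔ (G.Adj u (s 0) ↔ j + 1 ≠ m + 1) := by
        rw [hs' j (by omega)]
        rcases Nat.lt_or_ge j m with hjm | hjm
        · simpa only [show j + 1 ≠ m + 1 by omega, ne_eq, not_false_eq_true, iff_true]
            using hbefore j hjm
        · obtain rfl : j = m := by omega
          simp only [ne_eq, not_true_eq_false, iff_false]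
          tauto
      rw [hu']
      by_cases h0 : G.Adj u (s 0)
      · exact Or.inr fun j hj => by simpa [h0] using (hold j hj).not
      · exact Or.inl fun j hj => by simpa [h0] using hold j hj
    · refine (hs.uniq i hi0 hi).imp (fun h j hj => ?_) (fun h j hj => ?_) <;>
        rw [hs' i hi, hs' j (by omega)] <;> exact h j hj

theorem exists_update_succ (hs : IsChainSeq G I m s) {u : V} (hu : u ∉ I)
    (hus : ∀ i ≤ m, s i ≠ u) {a : ℕ} (ham : a ≤ m)
    (ha : ¬ (G.Adj u (s a) ↔ G.Adj u (s 0))) :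
    ∃ n ≤ m, IsChainSeq G I (n + 1) (Function.update s (n + 1) u) := by
  classical
  have hex : ∃ n, ¬ (G.Adj u (s n) ↔ G.Adj u (s 0)) := ⟨a, ha⟩
  have hnm : Nat.find hex ≤ m := (Nat.find_min' hex ha).trans ham
  refine ⟨Nat.find hex, hnm, (hs.mono hnm).update_succ hu (fun i hi => hus i (hi.trans hnm))
    ((Nat.find_pos hex).mpr (not_not.mpr Iff.rfl))
    (fun j hj => not_not.mp (Nat.find_min hex hj)) (Nat.find_spec hex)⟩

end IsChainSeq

def chainSpan (G : SimpleGraph V) (x y : V) : Set V :=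
  {v | ∃ m s, IsChainSeq G {x, y} m s ∧ s 0 = x ∧ ∃ i ≤ m, s i = v}

theorem pair_subset_chainSpan {G : SimpleGraph V} {x y : V} (hxy : x ≠ y) :
    {x, y} ⊆ chainSpan G x y := by
  have hpair := IsChainSeq.pair (G := G) (Set.mem_insert x {y}) (Set.mem_insert_of_mem x rfl) hxy
  exact Set.pair_subset ⟨1, _, hpair, rfl, 0, zero_le_one, rfl⟩
    ⟨1, _, hpair, rfl, 1, le_rfl, rfl⟩

theorem graphModule_chainSpan {G : SimpleGraph V} {x y : V} (hxy : x ≠ y) :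
    GraphModule G (chainSpan G x y) := by
  refine GraphModule.of_forall_adj_iff x fun u hu a ha => ?_
  obtain ⟨m, s, hs, hs0, i, him, rfl⟩ := ha
  by_contra hdist
  have huI : u ∉ ({x, y} : Set V) := fun h => hu (pair_subset_chainSpan hxy h)
  have hus : ∀ j ≤ m, s j ≠ u := fun j hj h => hu ⟨m, s, hs, hs0, j, hj, h⟩
  obtain ⟨n, -, hn⟩ := hs.exists_update_succ huI hus him (by rwa [hs0])
  refine hu ⟨n + 1, _, hn, ?_, n + 1, le_rfl, Function.update_self _ _ _⟩
  rw [Function.update_of_ne (by omega)]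
  exact hs0

theorem IsPrimeGraph.hasChain {G : SimpleGraph V} (hG : IsPrimeGraph G) {x1 x2 x3 : V}
    (h12 : x1 ≠ x2) (h13 : x1 ≠ x3) (h23 : x2 ≠ x3) : HasChain G {x1, x2} x3 := by
  have hsub := pair_subset_chainSpan (G := G) h12
  rcases hG _ (graphModule_chainSpan h12) with hsing | huniv
  · exact absurd (hsing (hsub (Set.mem_insert _ _)) (hsub (Set.mem_insert_of_mem _ rfl))) h12
  obtain ⟨m, s, hs, -, i, him, rfl⟩ : x3 ∈ chainSpan G x1 x2 := huniv ▸ Set.mem_univ x3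
  have hx3 : s i ∉ ({x1, x2} : Set V) := by simp [h13.symm, h23.symm]
  have hi : 2 ≤ i := by
    by_contra hi
    interval_cases i
    exacts [hx3 hs.mem_zero, hx3 hs.mem_one]
  exact hasChain_iff.mpr ⟨i, s, hi, hs.mono him, rfl⟩

theorem isPrimeGraph_of_hasChain {G : SimpleGraph V}
    (h : ∀ x1 x2 x3 : V, x1 ≠ x2 → x1 ≠ x3 → x2 ≠ x3 → HasChain G {x1, x2} x3) :
    IsPrimeGraph G := by
  intro X hX
  refine or_iff_not_imp_left.mpr fun hX1 =>
    Set.eq_univ_of_forall fun x3 => by_contra fun hx3 => ?_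
  obtain ⟨x1, hx1, x2, hx2, h12⟩ := Set.not_subsingleton_iff.mp hX1
  obtain ⟨m, s, -, hs, rfl⟩ :=
    hasChain_iff.mp (h x1 x2 x3 h12 (ne_of_mem_of_not_mem hx1 hx3) (ne_of_mem_of_not_mem hx2 hx3))
  exact hx3 (hs.mem_of_graphModule hX (Set.pair_subset hx1 hx2) m le_rfl)

theorem statement0 (G : SimpleGraph V) :
    IsPrimeGraph G ↔
      ∀ x1 x2 x3 : V, x1 ≠ x2 → x1 ≠ x3 → x2 ≠ x3 → HasChain G {x1, x2} x3 :=
  ⟨fun hG _ _ _ => hG.hasChain, isPrimeGraph_of_hasChain⟩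
end

section
/- Let G be a graph, I ⊆ V(G) a set with at least two vertices, and v ∈ V(G) \ I. Then G has a chain from I to v if and only if every module of G containing I as a subset also contains v. -/
variable {V : Type*}

/-!
If `X` is a module containing `I`, every vertex `vᵢ` (`i ≥ 2`) of a chain distinguishes `v₀` from
`vᵢ₋₁`, so by induction along the chain it cannot lie outside `X`. Conversely, `I` together with
all endpoints of chains is a module: a vertex `u` outside it that distinguishes two of its members
either distinguishes two vertices `a, b` of `I`, and then `a, b, u` is a chain, or is uniform on `I`
and disagrees with it at some chain vertex; cutting that chain at the first vertex where `u`
disagrees with `I` and appending `u` gives a chain to `u`.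
-/

theorem graphModule_iff {G : SimpleGraph V} {X : Set V} :
    GraphModule G X ↔ ∀ u ∉ X, ∀ a ∈ X, ∀ b ∈ X, (G.Adj u a ↔ G.Adj u b) := by
  refine ⟨fun hX u hu a ha b hb => ?_, fun hX u hu => ?_⟩
  · rcases hX u hu with hall | hnone
    · exact iff_of_true (hall a ha) (hall b hb)
    · exact iff_of_false (hnone a ha) (hnone b hb)
  · by_cases h : ∃ a ∈ X, G.Adj u a
    · obtain ⟨a, ha, hua⟩ := h
      exact Or.inl fun b hb => (hX u hu a ha b hb).1 hua
    · exact Or.inr fun b hb hub => h ⟨b, hb, hub⟩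

namespace GraphChain

variable {G : SimpleGraph V} {I : Set V} {w : V} {m : ℕ} {v : Fin (m + 1) → V}

theorem val_one (hc : GraphChain G I w m v) : ((1 : Fin (m + 1)) : ℕ) = 1 := by
  rw [Fin.val_one', Nat.mod_eq_of_lt (by linarith [hc.two_le])]

theorem mem_of_lt_two (hc : GraphChain G I w m v) (i : Fin (m + 1)) (hi : (i : ℕ) < 2) :
    v i ∈ I := by
  obtain hi | hi : (i : ℕ) = 0 ∨ (i : ℕ) = 1 := by omega
  · rw [show i = 0 from Fin.ext hi]
    exact hc.mem0
  · rw [show i = 1 from Fin.ext (hi.trans hc.val_one.symm)]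
    exact hc.mem1

theorem adj_zero_iff_not_adj_pred (hc : GraphChain G I w m v) {i j : Fin (m + 1)}
    (hi : 2 ≤ (i : ℕ)) (hj : (j : ℕ) + 1 = i) :
    G.Adj (v i) (v 0) ↔ ¬ G.Adj (v i) (v j) := by
  have h0 : ((0 : Fin (m + 1)) : ℕ) = 0 := Fin.val_zero _
  rcases hc.uniq i (by omega) with h | h
  · rw [h 0 (by omega), h j (by omega)]
    omega
  · rw [← not_iff_not, h 0 (by omega), h j (by omega)]
    omega

theorem mem_of_graphModule (hc : GraphChain G I w m v) {X : Set V} (hX : GraphModule G X)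
    (hIX : I ⊆ X) (i : Fin (m + 1)) : v i ∈ X := by
  induction i using WellFoundedLT.induction with
  | _ i ih =>
    by_cases hi : (i : ℕ) < 2
    · exact hIX (hc.mem_of_lt_two i hi)
    by_contra hiX
    let j : Fin (m + 1) := ⟨i - 1, by omega⟩
    have h0 : ((0 : Fin (m + 1)) : ℕ) = 0 := Fin.val_zero _
    have hsame := graphModule_iff.1 hX (v i) hiX (v 0)
      (ih 0 (Fin.lt_def.2 (by omega))) (v j) (ih j (Fin.lt_def.2 (by simp [j]; omega)))
    exact iff_not_self
      (hsame.symm.trans (hc.adj_zero_iff_not_adj_pred (by omega) (by simp [j]; omega)))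

theorem castLE (hc : GraphChain G I w m v) (n : Fin (m + 1)) (hn : 2 ≤ (n : ℕ)) :
    GraphChain G I (v n) n (v ∘ Fin.castLE n.isLt) where
  two_le := hn
  inj := hc.inj.comp (Fin.castLE_injective _)
  mem0 := by simpa using hc.mem0
  mem1 := by
    have h1 : Fin.castLE n.isLt 1 = 1 := by
      ext
      rw [Fin.val_castLE, hc.val_one, Fin.val_one', Nat.mod_eq_of_lt (by omega)]
    simpa [h1] using hc.mem1
  not_mem i hi := hc.not_mem _ (by simpa using hi)
  last_eq := congrArg v (Fin.ext (by simp))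
  uniq i hi := by
    rcases hc.uniq (Fin.castLE n.isLt i) hi with h | h
    · exact Or.inl fun j hj => h (Fin.castLE n.isLt j) hj
    · exact Or.inr fun j hj => h (Fin.castLE n.isLt j) hj

theorem mem_or_hasChain (hc : GraphChain G I w m v) (i : Fin (m + 1)) :
    v i ∈ I ∨ HasChain G I (v i) := by
  by_cases hi : (i : ℕ) < 2
  · exact Or.inl (hc.mem_of_lt_two i hi)
  · exact Or.inr ⟨_, _, hc.castLE i (by omega)⟩

theorem snoc (hc : GraphChain G I w m v) {u : V} (hu : u ∉ I) (hfresh : ∀ j, v j ≠ u)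
    (h : (∀ j, G.Adj u (v j) ↔ j = Fin.last m) ∨ (∀ j, ¬ G.Adj u (v j) ↔ j = Fin.last m)) :
    GraphChain G I u (m + 1) (Fin.snoc (α := fun _ => V) v u) where
  two_le := by linarith [hc.two_le]
  inj := Fin.snoc_injective_iff.2 ⟨hc.inj, fun ⟨j, hj⟩ => hfresh j hj⟩
  mem0 := by
    rw [← Fin.castSucc_zero, Fin.snoc_castSucc]
    exact hc.mem0
  mem1 := by
    have h1 : (1 : Fin (m + 2)) = Fin.castSucc 1 :=
      Fin.ext (by rw [Fin.val_castSucc, hc.val_one, Fin.val_one])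
    rw [h1, Fin.snoc_castSucc]
    exact hc.mem1
  not_mem i hi := by
    induction i using Fin.lastCases with
    | last => simpa using hu
    | cast i => simpa using hc.not_mem i (by simpa using hi)
  last_eq := by simp
  uniq i hi := by
    have castSucc_of_lt {j : Fin (m + 2)} (hj : j < i) : ∃ j', Fin.castSucc j' = j :=
      Fin.exists_castSucc_eq.2 (Fin.ne_last_of_lt hj)
    induction i using Fin.lastCases with
    | last =>
      have hpred (j : Fin (m + 1)) : (j : ℕ) + 1 = m + 1 ↔ j = Fin.last m := by
        rw [Fin.ext_iff, Fin.val_last]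
        omega
      rcases h with h | h
      · refine Or.inl fun j hj => ?_
        obtain ⟨j, rfl⟩ := castSucc_of_lt hj
        simpa only [Fin.snoc_castSucc, Fin.snoc_last, Fin.val_castSucc, Fin.val_last, hpred]
          using h j
      · refine Or.inr fun j hj => ?_
        obtain ⟨j, rfl⟩ := castSucc_of_lt hj
        simpa only [Fin.snoc_castSucc, Fin.snoc_last, Fin.val_castSucc, Fin.val_last, hpred]
          using h j
    | cast i =>
      rcases hc.uniq i (by simpa using hi) with h | h
      · refine Or.inl fun j hj => ?_
        obtain ⟨j, rfl⟩ := castSucc_of_lt hj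
        simpa only [Fin.snoc_castSucc, Fin.val_castSucc] using h j hj
      · refine Or.inr fun j hj => ?_
        obtain ⟨j, rfl⟩ := castSucc_of_lt hj
        simpa only [Fin.snoc_castSucc, Fin.val_castSucc] using h j hj

theorem hasChain_of_not_adj_iff (hc : GraphChain G I w m v) {u x : V} (hu : u ∉ I)
    (hfresh : ∀ j, v j ≠ u) (hI : ∀ y ∈ I, G.Adj u y ↔ G.Adj u x)
    (hw : ¬ (G.Adj u w ↔ G.Adj u x)) : HasChain G I u := by
  obtain ⟨n, hn, hmin⟩ := wellFounded_lt.has_min {j | ¬ (G.Adj u (v j) ↔ G.Adj u x)}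
    ⟨Fin.last m, by simpa [hc.last_eq] using hw⟩
  have hn2 : 2 ≤ (n : ℕ) := by
    by_contra hlt
    exact hn (hI _ (hc.mem_of_lt_two n (by omega)))
  have hfirst (j : Fin (n + 1)) :
      ¬ (G.Adj u (v (Fin.castLE n.isLt j)) ↔ G.Adj u x) ↔ j = Fin.last n := by
    refine ⟨fun hj => ?_, fun hj => ?_⟩
    · by_contra hne
      refine hmin _ hj (Fin.lt_def.2 ?_)
      have := Fin.val_lt_last hne
      simp only [Fin.val_castLE]
      omega
    · rwa [hj, show Fin.castLE n.isLt (Fin.last n) = n from Fin.ext (Fin.val_castLE ..)]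
  refine ⟨_, _, (hc.castLE n hn2).snoc hu (fun j => hfresh _) ?_⟩
  by_cases hx : G.Adj u x
  · exact Or.inr fun j => by simpa [hx] using hfirst j
  · exact Or.inl fun j => by simpa [hx] using hfirst j

end GraphChain

section

variable {G : SimpleGraph V} {I : Set V}

theorem hasChain_of_mem_of_not_adj_iff {a b u : V} (ha : a ∈ I) (hb : b ∈ I) (hu : u ∉ I)
    (h : ¬ (G.Adj u a ↔ G.Adj u b)) : HasChain G I u := by
  have hab : a ≠ b := by rintro rfl; exact h Iff.rfl
  have hua : u ≠ a := by rintro rfl; exact hu ha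
  have hub : u ≠ b := by rintro rfl; exact hu hb
  refine ⟨2, ![a, b, u], le_rfl, ?_, ha, hb, ?_, rfl, ?_⟩
  · intro i j hij
    fin_cases i <;> fin_cases j <;> simp_all
  · intro i hi
    fin_cases i <;> simp_all
  · intro i hi
    fin_cases i
    · simp at hi
    · by_cases hba : G.Adj b a
      · exact Or.inl fun j hj => by fin_cases j <;> simp_all
      · exact Or.inr fun j hj => by fin_cases j <;> simp_all
    · by_cases hub : G.Adj u b
      · exact Or.inl fun j hj => by fin_cases j <;> simp_all
      · exact Or.inr fun j hj => by fin_cases j <;> simp_all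

theorem graphModule_union_hasChain : GraphModule G (I ∪ {w | HasChain G I w}) := by
  rw [graphModule_iff]
  intro u hu a ha b hb
  have huI : u ∉ I := fun h => hu (Or.inl h)
  have huC : ¬ HasChain G I u := fun h => hu (Or.inr h)
  obtain ⟨x, hx⟩ : I.Nonempty := by
    rcases ha with ha | ⟨m, v, hc⟩
    exacts [⟨a, ha⟩, ⟨v 0, hc.mem0⟩]
  have hI : ∀ y ∈ I, G.Adj u y ↔ G.Adj u x := fun y hy => by
    by_contra h
    exact huC (hasChain_of_mem_of_not_adj_iff hy hx huI h)
  suffices hX : ∀ c ∈ I ∪ {w | HasChain G I w}, G.Adj u c ↔ G.Adj u x from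
    (hX a ha).trans (hX b hb).symm
  rintro c (hc | ⟨m, v, hc⟩)
  · exact hI c hc
  · by_contra h
    refine huC (hc.hasChain_of_not_adj_iff huI (fun j hj => hu ?_) hI h)
    exact hj ▸ hc.mem_or_hasChain j

end

theorem statement1_general (G : SimpleGraph V) (I : Set V)
    (v : V) (hv : v ∉ I) :
    HasChain G I v ↔ ∀ X : Set V, GraphModule G X → I ⊆ X → v ∈ X := by
  refine ⟨fun ⟨m, u, hc⟩ X hX hIX => hc.last_eq ▸ hc.mem_of_graphModule hX hIX (Fin.last m),
    fun h => ?_⟩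
  exact (h _ graphModule_union_hasChain Set.subset_union_left).resolve_left hv

theorem statement1 (G : SimpleGraph V) (I : Set V)
    (hI : ∃ x ∈ I, ∃ y ∈ I, x ≠ y) (v : V) (hv : v ∉ I) :
    HasChain G I v ↔ ∀ X : Set V, GraphModule G X → I ⊆ X → v ∈ X :=
  statement1_general G I v hv
end

section
/- Let G = (V,E) be a finite graph with n ≥ 2 vertices and tree rank t(G). Then the tree height h(G) of G satisfies h(G) ≥ (1/2) · (n / t(G))^{1/(t(G)+1)}. -/
variable {V : Type*}

def TypeTreeAdj (G : SimpleGraph V) (A : Set (List Bool)) (a : List Bool → V) : Prop :=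
  ∀ η ∈ A, ∀ (η' : List Bool) (b : Bool), (η' ++ [b]) <+: η → (G.Adj (a η) (a η') ↔ b = true)

def IsTypeTree (G : SimpleGraph V) (A : Set (List Bool)) (a : List Bool → V) : Prop :=
  Set.InjOn a A ∧ (∀ v : V, ∃ η ∈ A, a η = v) ∧
    (∀ η ∈ A, ∀ η', η' <+: η → η' ∈ A) ∧ TypeTreeAdj G A a

def IsFullTypeTree (G : SimpleGraph V) (t : ℕ) (a : List Bool → V) : Prop :=
  Set.InjOn a {η : List Bool | η.length < t} ∧
    TypeTreeAdj G {η : List Bool | η.length < t} a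

def PrefixChain (J : Finset (List Bool)) : Prop :=
  ∀ η ∈ J, ∀ η' ∈ J, η <+: η' ∨ η' <+: η

namespace Statement5Aux

open List

/-- Any two lists are prefix-comparable or diverge after a common prefix. -/
lemma split3 (σ τ : List Bool) :
    σ <+: τ ∨ τ <+: σ ∨ ∃ ρ b, (ρ ++ [b]) <+: σ ∧ (ρ ++ [!b]) <+: τ := by
  induction σ generalizing τ with
  | nil => exact Or.inl (nil_prefix)
  | cons x σ' ih =>
    cases τ with
    | nil => exact Or.inr (Or.inl nil_prefix)
    | cons y τ' =>
      by_cases hxy : x = y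
      · subst hxy
        rcases ih τ' with hc | hc | ⟨ρ, b, h1, h2⟩
        · exact Or.inl (List.cons_prefix_cons.2 ⟨rfl, hc⟩)
        · exact Or.inr (Or.inl (List.cons_prefix_cons.2 ⟨rfl, hc⟩))
        · exact Or.inr (Or.inr ⟨x :: ρ, b,
            List.cons_prefix_cons.2 ⟨rfl, h1⟩, List.cons_prefix_cons.2 ⟨rfl, h2⟩⟩)
      · refine Or.inr (Or.inr ⟨[], x, ?_, ?_⟩)
        · simpa using List.cons_prefix_cons.2 ⟨rfl, nil_prefix (l := σ')⟩
        · have hy : y = !x := by cases x <;> cases y <;> simp_all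
          subst hy
          simpa using List.cons_prefix_cons.2 ⟨rfl, nil_prefix (l := τ')⟩

lemma exists_next_bit {σ τ : List Bool} (hp : σ <+: τ) (hne : σ ≠ τ) :
    ∃ b, (σ ++ [b]) <+: τ := by
  obtain ⟨r, rfl⟩ := hp
  cases r with
  | nil => simp at hne
  | cons b r' => exact ⟨b, ⟨r', by simp⟩⟩

/-- `PP A d ξ` : there is a full binary type-subtree of depth `d` inside `A`
whose root extends `ξ`. -/
def PP (A : Set (List Bool)) : ℕ → List Bool → Prop
  | 0, _ => True
  | d+1, ξ => ∃ ρ ∈ A, ξ <+: ρ ∧ PP A d (ρ ++ [false]) ∧ PP A d (ρ ++ [true])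

lemma PP_zero (A : Set (List Bool)) (ξ : List Bool) : PP A 0 ξ := by
  simp [PP]

lemma PP_succ {A : Set (List Bool)} {d : ℕ} {ξ : List Bool} :
    PP A (d+1) ξ ↔ ∃ ρ ∈ A, ξ <+: ρ ∧ PP A d (ρ ++ [false]) ∧ PP A d (ρ ++ [true]) :=
  Iff.rfl

lemma PP_anti {A : Set (List Bool)} {d : ℕ} {ξ ξ' : List Bool} (hp : ξ <+: ξ') :
    PP A d ξ' → PP A d ξ := by
  cases d with
  | zero => exact fun _ => PP_zero A ξ
  | succ d =>
    rintro ⟨ρ, hρ, hpre, h0, h1⟩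
    exact ⟨ρ, hρ, hp.trans hpre, h0, h1⟩

/-- From `PP A d ξ` extract an embedded full binary tree. -/
lemma PP_tree {A : Set (List Bool)} : ∀ (d : ℕ) (ξ : List Bool), PP A d ξ →
    ∃ ν : List Bool → List Bool, (∀ σ : List Bool, σ.length < d → ν σ ∈ A) ∧
      ξ <+: ν [] ∧ ∀ σ b, σ.length + 1 < d → (ν σ ++ [b]) <+: ν (σ ++ [b])
  | 0, ξ, _ => ⟨fun _ => ξ, by simp, prefix_rfl, by simp⟩
  | d+1, ξ, h => by
    obtain ⟨ρ, hρA, hpre, h0, h1⟩ := h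
    obtain ⟨ν₀, hm0, hr0, he0⟩ := PP_tree d _ h0
    obtain ⟨ν₁, hm1, hr1, he1⟩ := PP_tree d _ h1
    refine ⟨fun σ => match σ with
      | [] => ρ
      | false :: σ' => ν₀ σ'
      | true :: σ' => ν₁ σ', ?_, hpre, ?_⟩
    · intro σ hσ
      match σ with
      | [] => exact hρA
      | false :: σ' => exact hm0 σ' (by simpa using hσ)
      | true :: σ' => exact hm1 σ' (by simpa using hσ)
    · intro σ b hσ
      match σ with
      | [] =>
        cases b
        · exact hr0
        · exact hr1
      | false :: σ' =>
        show (ν₀ σ' ++ [b]) <+: ν₀ (σ' ++ [b])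
        exact he0 σ' b (by simpa using hσ)
      | true :: σ' =>
        show (ν₁ σ' ++ [b]) <+: ν₁ (σ' ++ [b])
        exact he1 σ' b (by simpa using hσ)

section Nu

variable {d : ℕ} {ν : List Bool → List Bool}
  (he : ∀ σ b, σ.length + 1 < d → (ν σ ++ [b]) <+: ν (σ ++ [b]))

include he

lemma nu_mono : ∀ τ : List Bool, τ.length < d → ∀ σ, σ <+: τ → ν σ <+: ν τ := by
  intro τ
  induction τ using List.reverseRecOn with
  | nil =>
    intro _ σ hσ
    rw [List.prefix_nil.mp hσ]
  | append_singleton τ' b ih =>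
    intro hlen σ hσ
    rcases List.prefix_concat_iff.mp hσ with rfl | hσ'
    · exact prefix_rfl
    · refine (ih (by simp at hlen; omega) σ hσ').trans ?_
      have : (ν τ' ++ [b]) <+: ν (τ' ++ [b]) := he τ' b (by simpa using hlen)
      exact (List.prefix_append _ _).trans this

lemma nu_bit {σ τ : List Bool} (hστ : (σ ++ [b]) <+: τ) (hτ : τ.length < d) :
    (ν σ ++ [b]) <+: ν τ := by
  have h1 : (ν σ ++ [b]) <+: ν (σ ++ [b]) :=
    he σ b (by have := hστ.length_le; simp at this ⊢; omega)
  exact h1.trans (nu_mono he τ hτ _ hστ)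

lemma nu_inj : Set.InjOn ν {η : List Bool | η.length < d} := by
  intro σ hσ τ hτ hστ
  simp only [Set.mem_setOf_eq] at hσ hτ
  by_contra hne
  rcases split3 σ τ with hc | hc | ⟨ρ, b, h1, h2⟩
  · obtain ⟨b, hb⟩ := exists_next_bit hc hne
    have := (nu_bit he hb hτ).length_le
    rw [hστ] at this
    simp at this
  · obtain ⟨b, hb⟩ := exists_next_bit hc (Ne.symm hne)
    have := (nu_bit he hb hσ).length_le
    rw [hστ] at this
    simp at this
  · have hb1 : (ν ρ ++ [b]) <+: ν τ := hστ ▸ nu_bit he h1 hσ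
    have hb2 : (ν ρ ++ [!b]) <+: ν τ := nu_bit he h2 hτ
    have heq : ν ρ ++ [b] = ν ρ ++ [!b] :=
      (prefix_of_prefix_length_le hb1 hb2 (by simp)).eq_of_length (by simp)
    simp at heq

end Nu

/-- If `PP A (t+1) []` then `G` has a full type tree of depth `t+1`. -/
lemma PP_to_full {G : SimpleGraph V} {A : Set (List Bool)} {a : List Bool → V} {t : ℕ}
    (hA : IsTypeTree G A a) (hP : PP A (t+1) []) :
    ∃ a' : List Bool → V, IsFullTypeTree G (t+1) a' := by
  obtain ⟨ν, hmem, -, he⟩ := PP_tree (t+1) [] hP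
  refine ⟨a ∘ ν, ?_, ?_⟩
  · exact hA.1.comp (nu_inj he) (fun σ hσ => hmem σ hσ)
  · intro η hη η' b hb
    have hη' : (ν η' ++ [b]) <+: ν η := nu_bit he hb hη
    exact hA.2.2.2 (ν η) (hmem η hη) (ν η') b hη'

/-- First place along a branch where `PP A d` fails. -/
lemma first_fail {A : Set (List Bool)} {d : ℕ} {ξ : List Bool} :
    ∀ η : List Bool, ξ <+: η → ¬ PP A d η → PP A d ξ →
    ∃ μ b, ξ <+: μ ∧ (μ ++ [b]) <+: η ∧ PP A d μ ∧ ¬ PP A d (μ ++ [b]) := by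
  intro η
  induction η using List.reverseRecOn with
  | nil =>
    intro hξ hnη hξP
    rw [List.prefix_nil.mp hξ] at hξP
    exact absurd hξP hnη
  | append_singleton η₀ b ih =>
    intro hξ hnη hξP
    have hξne : ξ ≠ η₀ ++ [b] := fun hh => hnη (hh ▸ hξP)
    have hξ₀ : ξ <+: η₀ := by
      rcases List.prefix_concat_iff.mp hξ with hh | hh
      · exact absurd hh hξne
      · exact hh
    by_cases hP0 : PP A d η₀
    · exact ⟨η₀, b, hξ₀, prefix_rfl, hP0, hnη⟩
    · obtain ⟨μ, b', h1, h2, h3, h4⟩ := ih hξ₀ hP0 hξP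
      exact ⟨μ, b', h1, h2.trans (List.prefix_append _ _), h3, h4⟩

/-- The recursive bound. -/
def B (h : ℕ) : ℕ → ℕ
  | 0 => 0
  | d+1 => h + 2 * h * B h d

lemma B_le_succ {h : ℕ} (hh : 1 ≤ h) (d : ℕ) : B h d ≤ B h (d+1) := by
  show B h d ≤ h + 2 * h * B h d
  nlinarith [Nat.zero_le (B h d)]

lemma B_lt_pow {h : ℕ} (hh : 1 ≤ h) : ∀ d, B h d + 1 ≤ (2 * h) ^ d
  | 0 => le_refl 1
  | d+1 => by
    have ih := B_lt_pow hh d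
    show h + 2 * h * B h d + 1 ≤ (2 * h) ^ (d + 1)
    have : (2 * h) ^ (d+1) = 2 * h * (2 * h) ^ d := by ring
    nlinarith [Nat.zero_le (B h d)]

open Classical in
/-- Main counting lemma. -/
lemma count_le {G : SimpleGraph V} {A : Set (List Bool)} {a : List Bool → V} {h : ℕ}
    (hA : IsTypeTree G A a) (hh : 1 ≤ h)
    (hchain : ∀ J : Finset (List Bool), ↑J ⊆ A → PrefixChain J → J.card ≤ h)
    (F : Finset (List Bool)) (hF : ∀ η, η ∈ F ↔ η ∈ A) :
    ∀ (d : ℕ) (ξ : List Bool), ¬ PP A (d+1) ξ →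
      (F.filter (fun η => ξ <+: η)).card ≤ B h d := by
  intro d
  induction d with
  | zero =>
    intro ξ hξ
    have : F.filter (fun η => ξ <+: η) = ∅ := by
      rw [Finset.filter_eq_empty_iff]
      intro η hη hp
      exact hξ ⟨η, (hF η).mp hη, hp, PP_zero A _, PP_zero A _⟩
    rw [this]
    simp [B]
  | succ d ih =>
    intro ξ hξ
    by_cases hPξ : PP A (d+1) ξ
    · set M : Finset (List Bool) :=
        F.filter (fun μ => ξ <+: μ ∧ PP A (d+1) μ) with hM
      have hMA : ↑M ⊆ A := by
        intro μ hμ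
        simp only [hM, Finset.coe_filter, Set.mem_setOf_eq] at hμ
        exact (hF μ).mp hμ.1
      have hMchain : PrefixChain M := by
        intro μ₁ h1 μ₂ h2
        simp only [hM, Finset.mem_filter] at h1 h2
        rcases split3 μ₁ μ₂ with hc | hc | ⟨ρ, b, hb1, hb2⟩
        · exact Or.inl hc
        · exact Or.inr hc
        · exfalso
          -- ξ <+: ρ
          have hξρ : ξ <+: ρ := by
            rcases Nat.lt_or_ge ρ.length ξ.length with hl | hl
            · exfalso
              have hbξ1 : (ρ ++ [b]) <+: ξ :=
                prefix_of_prefix_length_le hb1 h1.2.1 (by simp; omega)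
              have : (ρ ++ [b]) <+: μ₂ := hbξ1.trans h2.2.1
              have heq : ρ ++ [b] = ρ ++ [!b] :=
                (prefix_of_prefix_length_le this hb2 (by simp)).eq_of_length (by simp)
              simp at heq
            · have hξρb : ξ <+: ρ ++ [b] :=
                prefix_of_prefix_length_le h1.2.1 hb1 (by simp; omega)
              exact prefix_of_prefix_length_le hξρb (List.prefix_append ρ [b]) hl
          apply hξ
          have hρA : ρ ∈ A :=
            hA.2.2.1 μ₁ ((hF μ₁).mp h1.1) ρ ((List.prefix_append ρ [b]).trans hb1)
          have hpb1 : PP A (d+1) (ρ ++ [b]) := PP_anti hb1 h1.2.2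
          have hpb2 : PP A (d+1) (ρ ++ [!b]) := PP_anti hb2 h2.2.2
          refine ⟨ρ, hρA, hξρ, ?_, ?_⟩
          · cases b
            · exact hpb1
            · exact hpb2
          · cases b
            · exact hpb2
            · exact hpb1
      have hMcard : M.card ≤ h := hchain M hMA hMchain
      -- the cover
      set g : List Bool → Finset (List Bool) := fun μ =>
        (Finset.univ : Finset Bool).biUnion (fun b =>
          if PP A (d+1) (μ ++ [b]) then ∅ else F.filter (fun η => (μ ++ [b]) <+: η))
        with hg
      have hcover : F.filter (fun η => ξ <+: η) ⊆ M ∪ M.biUnion g := by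
        intro η hη
        rw [Finset.mem_filter] at hη
        by_cases hPη : PP A (d+1) η
        · exact Finset.mem_union_left _ (by
            rw [hM, Finset.mem_filter]; exact ⟨hη.1, hη.2, hPη⟩)
        · obtain ⟨μ, b, hξμ, hμη, hPμ, hnPμb⟩ := first_fail η hη.2 hPη hPξ
          have hμA : μ ∈ A := hA.2.2.1 η ((hF η).mp hη.1) μ
            ((List.prefix_append μ [b]).trans hμη)
          have hμM : μ ∈ M := by
            rw [hM, Finset.mem_filter]
            exact ⟨(hF μ).mpr hμA, hξμ, hPμ⟩
          refine Finset.mem_union_right _ (Finset.mem_biUnion.mpr ⟨μ, hμM, ?_⟩)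
          rw [hg]
          refine Finset.mem_biUnion.mpr ⟨b, Finset.mem_univ b, ?_⟩
          rw [if_neg hnPμb, Finset.mem_filter]
          exact ⟨hη.1, hμη⟩
      have hgcard : ∀ μ ∈ M, (g μ).card ≤ 2 * B h d := by
        intro μ _
        rw [hg]
        refine (Finset.card_biUnion_le).trans ?_
        have hone : ∀ b : Bool,
            (if PP A (d+1) (μ ++ [b]) then (∅ : Finset (List Bool))
              else F.filter (fun η => (μ ++ [b]) <+: η)).card ≤ B h d := by
          intro b
          by_cases hb : PP A (d+1) (μ ++ [b])
          · rw [if_pos hb]; simp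
          · rw [if_neg hb]; exact ih (μ ++ [b]) hb
        calc ∑ b : Bool, (if PP A (d+1) (μ ++ [b]) then (∅ : Finset (List Bool))
              else F.filter (fun η => (μ ++ [b]) <+: η)).card
            ≤ ∑ _b : Bool, B h d := Finset.sum_le_sum (fun b _ => hone b)
          _ = 2 * B h d := by simp [two_mul]
      calc (F.filter (fun η => ξ <+: η)).card
          ≤ (M ∪ M.biUnion g).card := Finset.card_le_card hcover
        _ ≤ M.card + (M.biUnion g).card := Finset.card_union_le _ _
        _ ≤ M.card + ∑ μ ∈ M, (g μ).card := by
            exact Nat.add_le_add_left Finset.card_biUnion_le _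
        _ ≤ M.card + ∑ _μ ∈ M, 2 * B h d := by
            exact Nat.add_le_add_left (Finset.sum_le_sum hgcard) _
        _ = M.card + M.card * (2 * B h d) := by rw [Finset.sum_const, smul_eq_mul]
        _ ≤ h + h * (2 * B h d) := by
            have := hMcard
            exact Nat.add_le_add this (Nat.mul_le_mul_right _ this)
        _ = B h (d+1) := by show _ = h + 2 * h * B h d; ring
    · exact (ih ξ hPξ).trans (B_le_succ hh d)

end Statement5Aux

open Statement5Aux in
theorem statement5 [Fintype V] (G : SimpleGraph V) (n t h : ℕ)
    (hn : n = Fintype.card V) (hn2 : 2 ≤ n)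
    (htrank1 : ∃ a : List Bool → V, IsFullTypeTree G t a)
    (htrank2 : ∀ (t' : ℕ) (a : List Bool → V), IsFullTypeTree G t' a → t' ≤ t)
    (hheight1 : ∀ (A : Set (List Bool)) (a : List Bool → V), IsTypeTree G A a →
      ∃ J : Finset (List Bool), ↑J ⊆ A ∧ PrefixChain J ∧ h ≤ J.card)
    (hheight2 : ∃ (A : Set (List Bool)) (a : List Bool → V), IsTypeTree G A a ∧
      ∀ J : Finset (List Bool), ↑J ⊆ A → PrefixChain J → J.card ≤ h) :
    ((1 : ℝ) / 2) * (((n : ℝ) / (t : ℝ)) ^ ((1 : ℝ) / ((t : ℝ) + 1))) ≤ (h : ℝ) := by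
  classical
  obtain ⟨A, a, hA, hchain⟩ := hheight2
  have hVne : Nonempty V := by
    rw [hn] at hn2
    exact Fintype.card_pos_iff.mp (by omega)
  obtain ⟨v⟩ := hVne
  -- t ≥ 1
  have ht1 : 1 ≤ t := by
    refine htrank2 1 (fun _ => v) ⟨?_, ?_⟩
    · intro σ hσ τ hτ _
      simp only [Set.mem_setOf_eq, Nat.lt_one_iff, List.length_eq_zero_iff] at hσ hτ
      rw [hσ, hτ]
    · intro η hη η' b hb
      simp only [Set.mem_setOf_eq, Nat.lt_one_iff, List.length_eq_zero_iff] at hη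
      subst hη
      have := hb.length_le
      simp at this
  -- h ≥ 1
  have hh1 : 1 ≤ h := by
    obtain ⟨η, hη, -⟩ := hA.2.1 v
    have := hchain {η} (by simpa using hη) (by
      intro x hx y hy
      simp only [Finset.mem_singleton] at hx hy
      subst hx; subst hy; exact Or.inl List.prefix_rfl)
    simpa using this
  -- A is finite
  have hAfin : A.Finite := by
    apply Set.Finite.of_finite_image (f := a) (Set.toFinite _) hA.1
  set F : Finset (List Bool) := hAfin.toFinset with hFdef
  have hF : ∀ η, η ∈ F ↔ η ∈ A := fun η => Set.Finite.mem_toFinset hAfin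
  -- n ≤ F.card
  have hnF : n ≤ F.card := by
    have hsurj : Finset.univ ⊆ F.image a := by
      intro w _
      obtain ⟨η, hη, hw⟩ := hA.2.1 w
      exact Finset.mem_image.mpr ⟨η, (hF η).mpr hη, hw⟩
    calc n = (Finset.univ : Finset V).card := by rw [hn, Finset.card_univ]
      _ ≤ (F.image a).card := Finset.card_le_card hsurj
      _ ≤ F.card := Finset.card_image_le
  -- no PP of depth t+1
  have hnoPP : ¬ PP A (t+1) [] := by
    intro hP
    obtain ⟨a', ha'⟩ := PP_to_full hA hP
    have := htrank2 (t+1) a' ha'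
    omega
  -- counting
  have hcount : F.card ≤ B h t := by
    have := count_le hA hh1 hchain F hF t [] hnoPP
    simpa using this
  have hnat : n < (2 * h) ^ t := by
    have := B_lt_pow hh1 t
    omega
  -- now real arithmetic
  have h2h : (1 : ℝ) ≤ 2 * (h : ℝ) := by
    have : (1 : ℝ) ≤ (h : ℝ) := by exact_mod_cast hh1
    linarith
  have hxy : (n : ℝ) / (t : ℝ) ≤ ((2 * h : ℝ)) ^ (t + 1) := by
    have ht0 : (1 : ℝ) ≤ (t : ℝ) := by exact_mod_cast ht1
    have h1 : (n : ℝ) / (t : ℝ) ≤ (n : ℝ) := by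
      rw [div_le_iff₀ (by linarith)]
      nlinarith [Nat.cast_nonneg (α := ℝ) n]
    have h2 : (n : ℝ) ≤ ((2 * h : ℝ)) ^ t := by
      have : ((n : ℝ)) < (((2 * h) ^ t : ℕ) : ℝ) := by exact_mod_cast hnat
      push_cast at this
      linarith
    have h3 : ((2 * h : ℝ)) ^ t ≤ ((2 * h : ℝ)) ^ (t + 1) :=
      pow_le_pow_right₀ (by linarith) (by omega)
    linarith
  have hxnn : (0 : ℝ) ≤ (n : ℝ) / (t : ℝ) := by positivity
  have hexp : (0 : ℝ) ≤ 1 / ((t : ℝ) + 1) := by positivity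
  have key : ((n : ℝ) / (t : ℝ)) ^ ((1 : ℝ) / ((t : ℝ) + 1)) ≤ 2 * (h : ℝ) := by
    have h1 : ((n : ℝ) / (t : ℝ)) ^ ((1 : ℝ) / ((t : ℝ) + 1)) ≤
        (((2 * h : ℝ)) ^ (t + 1)) ^ ((1 : ℝ) / ((t : ℝ) + 1)) :=
      Real.rpow_le_rpow hxnn hxy hexp
    have h2 : (((2 * h : ℝ)) ^ (t + 1)) ^ ((1 : ℝ) / ((t : ℝ) + 1)) = 2 * (h : ℝ) := by
      rw [← Real.rpow_natCast (2 * (h : ℝ)) (t + 1), ← Real.rpow_mul (by linarith)]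
      push_cast
      rw [mul_one_div, div_self (by positivity), Real.rpow_one]
    rw [h2] at h1
    exact h1
  linarith
end

section
/- Suppose G = (V,E) is a finite graph with n vertices and tree rank t. Then G contains a complete or independent set of size at least (1/4) · (n/t)^{1/(t+1)}. -/
variable {V : Type*}

def GraphIndep (G : SimpleGraph V) (S : Set V) : Prop :=
  S.Pairwise fun x y => ¬ G.Adj x y

/-!
Split the vertex set greedily: pick a pivot, send the remaining vertices to the non-neighbour
or the neighbour side, and recurse on both sides. The pivots met along a branch have each
a uniform adjacency to all pivots below it, so a branch of length `h` yields a clique or an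
independent set of size at least `(h + 2) / 2`. On the other hand, if the Horton–Strahler
number of the greedy tree is `r`, the pivots carry a full type tree of height `r`, so `r ≤ t`;
and a binary tree of depth `h` and Strahler number `r` has fewer than `(h + 2) ^ r` nodes.
Hence `n < (h + 2) ^ t ≤ (2 |S|) ^ t` for a homogeneous set `S`.
-/

open Finset

section TypeTree

variable (G : SimpleGraph V)

theorem isFullTypeTree_zero (a : List Bool → V) : IsFullTypeTree G 0 a :=
  ⟨fun _ hx => absurd hx (Nat.not_lt_zero _), fun _ hη => absurd hη (Nat.not_lt_zero _)⟩

def joinTree (p : V) (a : Bool → List Bool → V) : List Bool → V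
  | [] => p
  | b :: μ => a b μ

variable {G}

theorem isFullTypeTree_joinTree {d : ℕ} {p : V} {a : Bool → List Bool → V}
    (ha : ∀ b, IsFullTypeTree G d (a b))
    (hp : ∀ b μ, μ.length < d → a b μ ≠ p ∧ (G.Adj p (a b μ) ↔ b = true)) :
    IsFullTypeTree G (d + 1) (joinTree p a) := by
  constructor
  · rintro (_ | ⟨b, μ⟩) hμ (_ | ⟨b', μ'⟩) hμ' h
    · rfl
    · exact absurd h.symm (hp b' μ' (Nat.lt_of_succ_lt_succ hμ')).1
    · exact absurd h (hp b μ (Nat.lt_of_succ_lt_succ hμ)).1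
    · replace hμ : μ.length < d := Nat.lt_of_succ_lt_succ hμ
      replace hμ' : μ'.length < d := Nat.lt_of_succ_lt_succ hμ'
      obtain rfl : b = b' := by
        have hb := (hp b μ hμ).2
        rw [show a b μ = a b' μ' from h, (hp b' μ' hμ').2] at hb
        exact (Bool.eq_iff_iff.2 hb).symm
      exact congrArg _ ((ha b).1 hμ hμ' h)
  · rintro (_ | ⟨b, μ⟩) hμ η' c hpre
    · simp at hpre
    replace hμ : μ.length < d := Nat.lt_of_succ_lt_succ hμ
    rcases η' with _ | ⟨c', ν⟩
    · obtain rfl : c = b := (List.cons_prefix_cons.1 hpre).1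
      exact G.adj_comm _ _ |>.trans (hp c μ hμ).2
    · rw [List.cons_append] at hpre
      obtain ⟨rfl, hν⟩ := List.cons_prefix_cons.1 hpre
      exact (ha c').2 μ hμ ν c hν

end TypeTree

theorem pow_add_pow_le_succ_pow_max {x a b : ℕ} (hx : 1 ≤ x) :
    x ^ a + x ^ b ≤ (x + 1) ^ max (max a b) (min a b + 1) := by
  wlog hab : a ≤ b generalizing a b
  · rw [max_comm a, min_comm a, add_comm (x ^ a)]
    exact this (le_of_not_ge hab)
  obtain ⟨e, he⟩ : ∃ e, max (max a b) (min a b + 1) = e + 1 :=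
    ⟨_, (Nat.succ_pred_eq_of_pos (by omega)).symm⟩
  rw [he]
  calc x ^ a + x ^ b ≤ x ^ e + x ^ (e + 1) :=
        add_le_add (Nat.pow_le_pow_right hx (by omega)) (Nat.pow_le_pow_right hx (by omega))
    _ = x ^ e * (x + 1) := by ring
    _ ≤ (x + 1) ^ e * (x + 1) := Nat.mul_le_mul_right _ (Nat.pow_le_pow_left (by omega) e)
    _ = (x + 1) ^ (e + 1) := (pow_succ _ _).symm

/-- `v 0` together with the `v j` adjacent to it is a clique, and together with the `v j` not
adjacent to it an independent set. -/
theorem exists_homogeneous_of_uniform_adj (G : SimpleGraph V) {v : ℕ → V} {m : ℕ}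
    (hv : ∀ i j, i < j → j ≤ m → v i ≠ v j ∧ (G.Adj (v j) (v i) ↔ G.Adj (v j) (v 0))) :
    ∃ S : Finset V, (G.IsClique (S : Set V) ∨ GraphIndep G (S : Set V)) ∧ m + 2 ≤ 2 * #S := by
  classical
  let J (b : Bool) := (Icc 1 m).filter fun j => G.Adj (v j) (v 0) ↔ b = true
  have hJ : #(J true) + #(J false) = m := by
    simpa [J] using card_filter_add_card_filter_not (s := Icc 1 m) fun j => G.Adj (v j) (v 0)
  have hinj (b : Bool) : Set.InjOn v (insert 0 (J b) : Finset ℕ) := by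
    intro i hi j hj hij
    simp only [mem_coe, mem_insert, mem_filter, mem_Icc, J] at hi hj
    by_contra hne
    rcases lt_or_gt_of_ne hne with h | h
    · exact (hv i j h (by omega)).1 hij
    · exact (hv j i h (by omega)).1 hij.symm
  have hcard (b : Bool) : #((insert 0 (J b)).image v) = #(J b) + 1 := by
    rw [card_image_of_injOn (hinj b), card_insert_of_notMem (by simp [J])]
  have hpair (b : Bool) :
      ((insert 0 (J b)).image v : Set V).Pairwise fun x y => G.Adj x y ↔ b = true := by
    have key : ∀ i ∈ insert 0 (J b), ∀ j ∈ insert 0 (J b), i < j →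
        (G.Adj (v i) (v j) ↔ b = true) := by
      intro i hi j hj hij
      simp only [mem_insert, mem_filter, mem_Icc, J] at hi hj
      rw [G.adj_comm, (hv i j hij (by omega)).2]
      exact hj.resolve_left (by omega) |>.2
    rw [coe_image, (hinj b).pairwise_image]
    intro i hi j hj hij
    rcases lt_or_gt_of_ne hij with h | h
    · exact key i hi j hj h
    · exact G.adj_comm _ _ |>.trans (key j hj i hi h)
  rcases le_total #(J false) #(J true) with h | h
  · exact ⟨_, Or.inl ((hpair true).imp fun _ _ h => h.mpr rfl), by rw [hcard]; omega⟩
  · exact ⟨_, Or.inr ((hpair false).imp fun _ _ h => by simpa using h), by rw [hcard]; omega⟩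

section GreedyTree

variable [Nonempty V]

noncomputable def pivot (s : Finset V) : V :=
  Classical.epsilon (· ∈ s)

theorem pivot_mem {s : Finset V} (hs : s.Nonempty) : pivot s ∈ s :=
  Classical.epsilon_spec hs

variable [Fintype V] (G : SimpleGraph V)

/-- Cells of the greedy type tree. Its nodes grow at the head of the list, whereas those of the
type trees of `TypeTreeAdj` grow at the end. -/
noncomputable def greedyCell : List Bool → Finset V
  | [] => univ
  | b :: η =>
    open Classical in
    ((greedyCell η).erase (pivot (greedyCell η))).filter
      fun w => G.Adj (pivot (greedyCell η)) w ↔ b = true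

variable {G}

theorem mem_greedyCell_cons {v : V} {b : Bool} {η : List Bool} :
    v ∈ greedyCell G (b :: η) ↔ v ∈ greedyCell G η ∧ v ≠ pivot (greedyCell G η) ∧
      (G.Adj (pivot (greedyCell G η)) v ↔ b = true) := by
  simp only [greedyCell, mem_filter, mem_erase]
  tauto

theorem greedyCell_cons_subset (b : Bool) (η : List Bool) :
    greedyCell G (b :: η) ⊆ greedyCell G η :=
  fun _ hv => (mem_greedyCell_cons.1 hv).1

theorem greedyCell_subset_of_suffix {μ η : List Bool} (h : μ <:+ η) :
    greedyCell G η ⊆ greedyCell G μ := by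
  obtain ⟨ν, rfl⟩ := h
  induction ν with
  | nil => rfl
  | cons b ν ih => exact (greedyCell_cons_subset b _).trans ih

theorem card_greedyCell {η : List Bool} (hne : (greedyCell G η).Nonempty) :
    #(greedyCell G η) = #(greedyCell G (false :: η)) + #(greedyCell G (true :: η)) + 1 := by
  classical
  simp only [greedyCell, Bool.false_eq_true, iff_false, iff_true]
  rw [← card_erase_add_one (pivot_mem hne),
    ← card_filter_add_card_filter_not fun w => G.Adj (pivot (greedyCell G η)) w]
  omega

theorem card_greedyCell_add_length_le :
    ∀ {η : List Bool}, (greedyCell G η).Nonempty → #(greedyCell G η) + η.length ≤ Fintype.card V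
  | [], _ => by simp [greedyCell]
  | b :: η, hne => by
    have hne' := hne.mono (greedyCell_cons_subset b η)
    have := card_greedyCell hne'
    have := card_greedyCell_add_length_le hne'
    cases b <;> simp only [List.length_cons] <;> omega

theorem exists_greedyCell_nonempty_forall_longer_eq_empty :
    ∃ L : List Bool, (greedyCell G L).Nonempty ∧
      ∀ μ : List Bool, L.length < μ.length → greedyCell G μ = ∅ := by
  have hfin : Set.Finite {η : List Bool | (greedyCell G η).Nonempty} :=
    (List.finite_length_lt Bool (Fintype.card V)).subset fun η hη =>
      Nat.lt_of_lt_of_le (by simpa using Nonempty.card_pos hη) (card_greedyCell_add_length_le hη)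
  obtain ⟨L, hL, hmax⟩ := Set.exists_max_image _ List.length hfin ⟨[], by simp [greedyCell]⟩
  refine ⟨L, hL, fun μ hμ => not_nonempty_iff_eq_empty.1 fun hne => ?_⟩
  exact absurd (hmax μ hne) (by omega)

variable (G)

/-- The Horton–Strahler number of the greedy tree below `η`, truncated at depth `h`. -/
noncomputable def greedyRank : ℕ → List Bool → ℕ
  | 0, _ => 0
  | h + 1, η =>
    if (greedyCell G η).Nonempty then
      max (max (greedyRank h (false :: η)) (greedyRank h (true :: η)))
        (min (greedyRank h (false :: η)) (greedyRank h (true :: η)) + 1)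
    else 0

variable {G}

theorem card_greedyCell_add_one_le_pow : ∀ (h : ℕ) (η : List Bool),
    (∀ μ : List Bool, μ.length = h → greedyCell G (μ ++ η) = ∅) →
    #(greedyCell G η) + 1 ≤ (h + 1) ^ greedyRank G h η
  | 0, η, hempty => by simpa [greedyRank] using hempty [] rfl
  | h + 1, η, hempty => by
    by_cases hne : (greedyCell G η).Nonempty
    · have ih (b : Bool) := card_greedyCell_add_one_le_pow h (b :: η) fun μ hμ => by
        simpa using hempty (μ ++ [b]) (by simp [hμ])
      have := ih false
      have := ih true
      have := pow_add_pow_le_succ_pow_max (x := h + 1)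
        (a := greedyRank G h (false :: η)) (b := greedyRank G h (true :: η)) (by omega)
      rw [greedyRank, if_pos hne, card_greedyCell hne]
      omega
    · simp [greedyRank, not_nonempty_iff_eq_empty.1 hne]

theorem exists_isFullTypeTree_of_le_greedyRank : ∀ (h : ℕ) (η : List Bool) (d : ℕ),
    d ≤ greedyRank G h η →
    ∃ a : List Bool → V, (∀ μ : List Bool, μ.length < d → a μ ∈ greedyCell G η) ∧
      IsFullTypeTree G d a
  | _, _, 0, _ => ⟨fun _ => Classical.arbitrary V, by simp, isFullTypeTree_zero G _⟩
  | 0, _, d + 1, hd => by simp [greedyRank] at hd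
  | h + 1, η, d + 1, hd => by
    rw [greedyRank] at hd
    split_ifs at hd with hne
    swap
    · omega
    by_cases hdeep : ∃ b, d + 1 ≤ greedyRank G h (b :: η)
    · obtain ⟨b, hb⟩ := hdeep
      obtain ⟨a, ha, hfull⟩ := exists_isFullTypeTree_of_le_greedyRank h (b :: η) (d + 1) hb
      exact ⟨a, fun μ hμ => greedyCell_cons_subset b η (ha μ hμ), hfull⟩
    push Not at hdeep
    have hsub (b : Bool) : d ≤ greedyRank G h (b :: η) := by
      have := hdeep false
      have := hdeep true
      cases b <;> omega
    choose a ha hfull using fun b => exists_isFullTypeTree_of_le_greedyRank h (b :: η) d (hsub b)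
    refine ⟨joinTree (pivot (greedyCell G η)) a, ?_, isFullTypeTree_joinTree hfull fun b μ hμ =>
      (mem_greedyCell_cons.1 (ha b μ hμ)).2⟩
    rintro (_ | ⟨b, μ⟩) hμ
    · exact pivot_mem hne
    · exact greedyCell_cons_subset b η (ha b μ (Nat.lt_of_succ_lt_succ hμ))

theorem exists_homogeneous_of_greedyCell_nonempty {L : List Bool}
    (hL : (greedyCell G L).Nonempty) :
    ∃ S : Finset V, (G.IsClique (S : Set V) ∨ GraphIndep G (S : Set V)) ∧
      L.length + 2 ≤ 2 * #S := by
  refine exists_homogeneous_of_uniform_adj G (v := fun k => pivot (greedyCell G (L.drop k)))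
    fun i j hij hj => ?_
  obtain ⟨j, rfl⟩ : ∃ j', j = j' + 1 := ⟨j - 1, by omega⟩
  have hmem (k : ℕ) (hk : k ≤ j) :
      pivot (greedyCell G (L.drop k)) ∈ greedyCell G (L[j] :: L.drop (j + 1)) := by
    have hsuffix : L.drop j <:+ L.drop k := by
      rw [show L.drop j = (L.drop k).drop (j - k) by rw [List.drop_drop]; congr 1; omega]
      exact List.drop_suffix _ _
    rw [← List.drop_eq_getElem_cons]
    exact greedyCell_subset_of_suffix hsuffix
      (pivot_mem (hL.mono (greedyCell_subset_of_suffix (List.drop_suffix k L))))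
  have hi := mem_greedyCell_cons.1 (hmem i (by omega))
  have h0 := mem_greedyCell_cons.1 (hmem 0 (by omega))
  exact ⟨hi.2.1, hi.2.2.trans h0.2.2.symm⟩

end GreedyTree

theorem exists_homogeneous_card_le_pow [Fintype V] (G : SimpleGraph V) (t : ℕ)
    (hG : ∀ a : List Bool → V, ¬ IsFullTypeTree G (t + 1) a) :
    ∃ S : Finset V, (G.IsClique (S : Set V) ∨ GraphIndep G (S : Set V)) ∧
      Fintype.card V ≤ (2 * #S) ^ t := by
  cases isEmpty_or_nonempty V
  · exact ⟨∅, Or.inl (by simp), by simp⟩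
  obtain ⟨L, hL, hlonger⟩ := exists_greedyCell_nonempty_forall_longer_eq_empty (G := G)
  obtain ⟨S, hS, hLS⟩ := exists_homogeneous_of_greedyCell_nonempty hL
  have hrank : greedyRank G (L.length + 1) [] ≤ t := by
    by_contra! ht
    obtain ⟨a, -, ha⟩ := exists_isFullTypeTree_of_le_greedyRank _ _ (t + 1) ht
    exact hG a ha
  have hcount : Fintype.card V + 1 ≤ (L.length + 2) ^ greedyRank G (L.length + 1) [] := by
    simpa [greedyCell] using card_greedyCell_add_one_le_pow (L.length + 1) []
      fun μ hμ => by simpa using hlonger μ (by omega)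
  refine ⟨S, hS, ?_⟩
  calc Fintype.card V ≤ (L.length + 2) ^ greedyRank G (L.length + 1) [] := by omega
    _ ≤ (L.length + 2) ^ t := Nat.pow_le_pow_right (by omega) hrank
    _ ≤ (2 * #S) ^ t := Nat.pow_le_pow_left hLS t

theorem rpow_div_le_of_le_pow {n t m : ℕ} (h : n ≤ m ^ t) :
    ((n : ℝ) / t) ^ (1 / ((t : ℝ) + 1)) ≤ m := by
  rcases Nat.eq_zero_or_pos t with rfl | ht
  · simp
  rcases Nat.eq_zero_or_pos m with rfl | hm
  · obtain rfl : n = 0 := by simpa [zero_pow ht.ne'] using h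
    simp only [Nat.cast_zero, zero_div]
    exact (Real.zero_rpow (by positivity)).le
  have hnt : (n : ℝ) / t ≤ (m : ℝ) ^ (t : ℝ) := by
    rw [Real.rpow_natCast]
    calc (n : ℝ) / t ≤ n := div_le_self (by positivity) (by exact_mod_cast ht)
      _ ≤ (m : ℝ) ^ t := by exact_mod_cast h
  calc ((n : ℝ) / t) ^ (1 / ((t : ℝ) + 1))
      ≤ ((m : ℝ) ^ (t : ℝ)) ^ (1 / ((t : ℝ) + 1)) :=
        Real.rpow_le_rpow (by positivity) hnt (by positivity)
    _ = (m : ℝ) ^ ((t : ℝ) / (t + 1)) := by rw [← Real.rpow_mul (by positivity)]; ring_nf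
    _ ≤ (m : ℝ) ^ (1 : ℝ) :=
        Real.rpow_le_rpow_of_exponent_le (by exact_mod_cast hm)
          ((div_le_one (by positivity)).2 (by linarith))
    _ = m := Real.rpow_one _

theorem statement6_general [Fintype V] (G : SimpleGraph V) (n t : ℕ)
    (hn : n = Fintype.card V)
    (htrank2 : ∀ (t' : ℕ) (a : List Bool → V), IsFullTypeTree G t' a → t' ≤ t) :
    ∃ S : Finset V, (G.IsClique (↑S : Set V) ∨ GraphIndep G (↑S : Set V)) ∧
      ((1 : ℝ) / 4) * (((n : ℝ) / (t : ℝ)) ^ ((1 : ℝ) / ((t : ℝ) + 1))) ≤ (S.card : ℝ) := by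
  obtain ⟨S, hS, hcard⟩ := exists_homogeneous_card_le_pow G t fun a ha => by
    have := htrank2 _ a ha
    omega
  refine ⟨S, hS, ?_⟩
  have := rpow_div_le_of_le_pow (hn ▸ hcard)
  push_cast at this
  linarith

theorem statement6 [Fintype V] (G : SimpleGraph V) (n t : ℕ)
    (hn : n = Fintype.card V)
    (htrank1 : ∃ a : List Bool → V, IsFullTypeTree G t a)
    (htrank2 : ∀ (t' : ℕ) (a : List Bool → V), IsFullTypeTree G t' a → t' ≤ t) :
    ∃ S : Finset V, (G.IsClique (↑S : Set V) ∨ GraphIndep G (↑S : Set V)) ∧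
      ((1 : ℝ) / 4) * (((n : ℝ) / (t : ℝ)) ^ ((1 : ℝ) / ((t : ℝ) + 1))) ≤ (S.card : ℝ) :=
  statement6_general G n t hn htrank2
end

section
/- In a type tree arrangement of a finite graph, for every level ℓ, the number of nodes at height ℓ whose tree rank equals the maximal tree rank t is at most 1. -/
variable {V : Type*}

def HasFullBelow (A : Set (List Bool)) (η : List Bool) (k : ℕ) : Prop :=
  ∃ f : List Bool → List Bool,
    (∀ σ : List Bool, σ.length < k → f σ ∈ A ∧ η <+: f σ) ∧
    Set.InjOn f {σ : List Bool | σ.length < k} ∧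
    (∀ σ σ' : List Bool, σ.length < k → σ'.length < k →
      ((σ <+: σ' ∧ σ ≠ σ') ↔ (f σ <+: f σ' ∧ f σ ≠ f σ')))


theorem statement7 [Fintype V] (G : SimpleGraph V) (A : Set (List Bool))
    (a : List Bool → V) (hT : IsTypeTree G A a) (t : ℕ)
    (hmax : ∀ η ∈ A, ¬ HasFullBelow A η (t + 1))
    (hex : ∃ η ∈ A, HasFullBelow A η t) :
    ∀ ℓ : ℕ, {η | η ∈ A ∧ η.length = ℓ ∧ HasFullBelow A η t}.Subsingleton := by
  intro ℓ η₁ h₁ η₂ h₂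
  by_contra hne
  obtain ⟨hA₁, hl₁, f₁, hf₁, hinj₁, hord₁⟩ := h₁
  obtain ⟨hA₂, hl₂, f₂, hf₂, hinj₂, hord₂⟩ := h₂
  have hlpos : 1 ≤ ℓ := by
    rcases Nat.eq_zero_or_pos ℓ with h0 | h
    · have e1 : η₁ = [] := List.length_eq_zero_iff.mp (hl₁.trans h0)
      have e2 : η₂ = [] := List.length_eq_zero_iff.mp (hl₂.trans h0)
      exact absurd (e1.trans e2.symm) hne
    · exact h
  have hincomp : ∀ x y : List Bool, η₁ <+: x → η₂ <+: y → ¬ x <+: y := by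
    intro x y hx hy hxy
    rcases List.prefix_or_prefix_of_prefix (hx.trans hxy) hy with h | h
    · exact hne (h.eq_of_length (hl₁.trans hl₂.symm))
    · exact hne (h.eq_of_length (hl₂.trans hl₁.symm)).symm
  -- helpers about the combined children
  have hmem : ∀ (b : Bool) (σ₀ : List Bool), σ₀.length < t →
      (if b = true then f₂ σ₀ else f₁ σ₀) ∈ A := by
    intro b σ₀ h; cases b <;> simp [(hf₁ σ₀ h).1, (hf₂ σ₀ h).1]
  have hpre : ∀ (b : Bool) (σ₀ : List Bool), σ₀.length < t →
      η₁ <+: (if b = true then f₂ σ₀ else f₁ σ₀) ∨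
      η₂ <+: (if b = true then f₂ σ₀ else f₁ σ₀) := by
    intro b σ₀ h; cases b <;> simp [(hf₁ σ₀ h).2, (hf₂ σ₀ h).2]
  have hlen : ∀ (b : Bool) (σ₀ : List Bool), σ₀.length < t →
      ℓ ≤ (if b = true then f₂ σ₀ else f₁ σ₀).length := by
    intro b σ₀ h
    rcases hpre b σ₀ h with hp | hp
    · exact hl₁ ▸ hp.length_le
    · exact hl₂ ▸ hp.length_le
  have hnn : ∀ (b : Bool) (σ₀ : List Bool), σ₀.length < t →
      (if b = true then f₂ σ₀ else f₁ σ₀) ≠ [] := by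
    intro b σ₀ h he
    have := hlen b σ₀ h
    rw [he] at this; simp at this; omega
  have hnil : ([] : List Bool) ∈ A := hT.2.2.1 η₁ hA₁ [] List.nil_prefix
  apply hmax [] hnil
  refine ⟨fun σ => match σ with
    | [] => []
    | (b :: σ₀) => if b then f₂ σ₀ else f₁ σ₀, ?_, ?_, ?_⟩
  · rintro (_ | ⟨b, σ₀⟩) hσ
    · exact ⟨hnil, List.nil_prefix⟩
    · exact ⟨hmem b σ₀ (by simpa using hσ), List.nil_prefix⟩
  · rintro (_ | ⟨b, σ₀⟩) hσ (_ | ⟨b', σ₀'⟩) hσ' heq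
    · rfl
    · exact absurd heq.symm (hnn b' σ₀' (by simpa using hσ'))
    · exact absurd heq (hnn b σ₀ (by simpa using hσ))
    · have hσ₀ : σ₀.length < t := by simpa using hσ
      have hσ₀' : σ₀'.length < t := by simpa using hσ'
      match b, b' with
      | false, false =>
        simp only [if_neg Bool.false_ne_true] at heq
        rw [hinj₁ hσ₀ hσ₀' heq]
      | true, true =>
        simp only [if_pos rfl] at heq
        rw [hinj₂ hσ₀ hσ₀' heq]
      | false, true =>
        exfalso
        simp only [if_neg Bool.false_ne_true, if_pos rfl] at heq
        exact hincomp (f₁ σ₀) (f₂ σ₀') (hf₁ σ₀ hσ₀).2 (hf₂ σ₀' hσ₀').2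
          (heq ▸ List.prefix_refl _)
      | true, false =>
        exfalso
        simp only [if_neg Bool.false_ne_true, if_pos rfl] at heq
        exact hincomp (f₁ σ₀') (f₂ σ₀) (hf₁ σ₀' hσ₀').2 (hf₂ σ₀ hσ₀).2
          (heq ▸ List.prefix_refl _)
  · rintro (_ | ⟨b, σ₀⟩) (_ | ⟨b', σ₀'⟩) hσ hσ'
    · simp
    · have hσ₀' : σ₀'.length < t := by simpa using hσ'
      constructor
      · intro _
        exact ⟨List.nil_prefix, fun h => hnn b' σ₀' hσ₀' h.symm⟩
      · intro _
        exact ⟨List.nil_prefix, by simp⟩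
    · have hσ₀ : σ₀.length < t := by simpa using hσ
      constructor
      · rintro ⟨h, -⟩
        exact absurd (List.eq_nil_of_prefix_nil h) (by simp)
      · rintro ⟨h, -⟩
        exact absurd (List.eq_nil_of_prefix_nil h) (hnn b σ₀ hσ₀)
    · have hσ₀ : σ₀.length < t := by simpa using hσ
      have hσ₀' : σ₀'.length < t := by simpa using hσ'
      match b, b' with
      | false, false =>
        simp only [if_neg Bool.false_ne_true]
        rw [List.cons_prefix_cons]
        constructor
        · rintro ⟨⟨-, hp⟩, hn⟩
          exact (hord₁ σ₀ σ₀' hσ₀ hσ₀').mp ⟨hp, fun h => hn (by rw [h])⟩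
        · rintro ⟨hp, hn⟩
          have := (hord₁ σ₀ σ₀' hσ₀ hσ₀').mpr ⟨hp, hn⟩
          exact ⟨⟨rfl, this.1⟩, fun h => this.2 (by injection h)⟩
      | true, true =>
        simp only [if_pos rfl]
        rw [List.cons_prefix_cons]
        constructor
        · rintro ⟨⟨-, hp⟩, hn⟩
          exact (hord₂ σ₀ σ₀' hσ₀ hσ₀').mp ⟨hp, fun h => hn (by rw [h])⟩
        · rintro ⟨hp, hn⟩
          have := (hord₂ σ₀ σ₀' hσ₀ hσ₀').mpr ⟨hp, hn⟩
          exact ⟨⟨rfl, this.1⟩, fun h => this.2 (by injection h)⟩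
      | false, true =>
        simp only [if_neg Bool.false_ne_true, if_pos rfl]
        constructor
        · rintro ⟨hp, -⟩
          rw [List.cons_prefix_cons] at hp
          exact absurd hp.1 (by simp)
        · rintro ⟨hp, -⟩
          exact absurd hp (hincomp _ _ (hf₁ σ₀ hσ₀).2 (hf₂ σ₀' hσ₀').2)
      | true, false =>
        simp only [if_neg Bool.false_ne_true, if_pos rfl]
        constructor
        · rintro ⟨hp, -⟩
          rw [List.cons_prefix_cons] at hp
          exact absurd hp.1 (by simp)
        · rintro ⟨hp, -⟩
          exfalso
          have p1 : η₁ <+: f₁ σ₀' := (hf₁ σ₀' hσ₀').2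
          have p2 : η₂ <+: f₁ σ₀' := (hf₂ σ₀ hσ₀).2.trans hp
          rcases List.prefix_or_prefix_of_prefix p1 p2 with h | h
          · exact absurd (h.eq_of_length (hl₁.trans hl₂.symm)) hne
          · exact absurd (h.eq_of_length (hl₂.trans hl₁.symm)).symm hne
end

section
/- Every chain of length t > 3 in a graph contains a chain of length t−1 that induces a prime subgraph. -/
variable {V : Type*}

/-!
Deleting `v 0` or `v 1` from a chain leaves a chain of length one less, and one of the two is
prime. Let `S` be a module, neither trivial nor everything, of the graph induced by a chain
`u 0, …, u m` with `m ≥ 3`. As `u (c + 1)` tells its predecessor `u c` apart from all earlier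
vertices, `S` is closed upwards beyond its second element, so `u m ∈ S`. Two consecutive
non-members just below a member `u a` are told apart by `u a` but not by `u m`, so exactly one of
`u 0`, `u 1` lies in `S`, and the other one sees it as it sees `u m`: thus `u 1 u 0` is an edge iff
`u m u (m - 1)` is not. If both deletions were non-prime, `v 2` would be adjacent to `v 1` iff to
`v 0`, against the chain condition at `v 2`.
-/

theorem Fin.val_succAbove {n : ℕ} (p : Fin (n + 1)) (i : Fin n) :
    (p.succAbove i : ℕ) = if (i : ℕ) < p then (i : ℕ) else (i : ℕ) + 1 := by
  unfold Fin.succAbove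
  split_ifs <;> simp_all [Fin.lt_def]

theorem GraphModule.adj_iff_adj {G : SimpleGraph V} {X : Set V} (hX : GraphModule G X)
    {u x y : V} (hu : u ∉ X) (hx : x ∈ X) (hy : y ∈ X) : G.Adj u x ↔ G.Adj u y := by
  rcases hX u hu with h | h
  exacts [iff_of_true (h x hx) (h y hy), iff_of_false (h x hx) (h y hy)]

theorem GraphModule.preimage {W : Type*} {G : SimpleGraph V} {X : Set V} (hX : GraphModule G X)
    (f : W → V) : GraphModule (G.comap f) (f ⁻¹' X) := fun a ha =>
  (hX (f a) ha).imp (fun h x hx => h (f x) hx) (fun h x hx => h (f x) hx)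

theorem exists_graphModule_comap_of_not_isPrimeGraph {ι : Type*} {G : SimpleGraph V}
    {v : ι → V} (hv : ¬ IsPrimeGraph (G.induce (Set.range v))) :
    ∃ S : Set ι, GraphModule (G.comap v) S ∧ S.Nontrivial ∧ S ≠ Set.univ := by
  simp only [IsPrimeGraph, not_forall, not_or, Set.not_subsingleton_iff] at hv
  obtain ⟨X, hX, hnt, hne⟩ := hv
  have hsurj := Set.rangeFactorization_surjective (f := v)
  refine ⟨Set.rangeFactorization v ⁻¹' X, hX.preimage _, hnt.preimage hsurj, fun h => hne ?_⟩
  exact hsurj.preimage_injective (h.trans Set.preimage_univ.symm)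

namespace GraphChain

variable {G : SimpleGraph V} {I : Set V} {w : V} {m : ℕ}

section

variable {v : Fin (m + 1) → V}

theorem adj_iff_adj_of_not_pred (hc : GraphChain G I w m v) {i j k : Fin (m + 1)}
    (hj : j < i) (hk : k < i) (hji : (j : ℕ) + 1 ≠ i) (hki : (k : ℕ) + 1 ≠ i) :
    G.Adj (v i) (v j) ↔ G.Adj (v i) (v k) := by
  rcases hc.uniq i (by omega) with h | h
  · exact iff_of_false ((h j hj).not.2 hji) ((h k hk).not.2 hki)
  · exact iff_of_true (not_not.1 ((h j hj).not.2 hji)) (not_not.1 ((h k hk).not.2 hki))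

theorem adj_pred_iff_not_adj (hc : GraphChain G I w m v) {i j k : Fin (m + 1)}
    (hji : (j : ℕ) + 1 = i) (hk : k < i) (hki : (k : ℕ) + 1 ≠ i) :
    G.Adj (v i) (v j) ↔ ¬ G.Adj (v i) (v k) := by
  have hj : j < i := by omega
  rcases hc.uniq i (by omega) with h | h
  · exact iff_of_true ((h j hj).2 hji) ((h k hk).not.2 hki)
  · exact iff_of_false ((h j hj).2 hji) ((h k hk).not.2 hki)

variable {S : Set (Fin (m + 1))}

theorem mem_of_pred_mem (hc : GraphChain G I w m v) (hS : GraphModule (G.comap v) S)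
    {a c d : Fin (m + 1)} (ha : a ∈ S) (hcS : c ∈ S) (hac : a < c) (hcd : (c : ℕ) + 1 = d) :
    d ∈ S := by
  by_contra hd
  have hmod : G.Adj (v d) (v c) ↔ G.Adj (v d) (v a) := hS.adj_iff_adj hd hcS ha
  exact iff_not_self (hmod.symm.trans (hc.adj_pred_iff_not_adj hcd (by omega) (by omega)))

theorem mem_of_le (hc : GraphChain G I w m v) (hS : GraphModule (G.comap v) S)
    {a b c : Fin (m + 1)} (ha : a ∈ S) (hb : b ∈ S) (hab : a < b) (hbc : b ≤ c) :
    c ∈ S := by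
  induction c using Fin.induction with
  | zero => exact absurd (hab.trans_le hbc) (Fin.not_lt_zero a)
  | succ c ih =>
    rcases hbc.eq_or_lt with rfl | hlt
    · exact hb
    · have hbc' := Fin.le_castSucc_iff.2 hlt
      exact hc.mem_of_pred_mem hS ha (ih hbc') (hab.trans_le hbc') (by simp)

theorem last_mem (hc : GraphChain G I w m v) (hS : GraphModule (G.comap v) S)
    (hnt : S.Nontrivial) : Fin.last m ∈ S := by
  obtain ⟨a, ha, b, hb, hab⟩ := hnt
  rcases hab.lt_or_gt with h | h
  exacts [hc.mem_of_le hS ha hb h (Fin.le_last b), hc.mem_of_le hS hb ha h (Fin.le_last a)]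

theorem mem_or_mem_of_succ_succ (hc : GraphChain G I w m v) (hS : GraphModule (G.comap v) S)
    {x y a b : Fin (m + 1)} (hxy : (x : ℕ) + 1 = y) (hya : (y : ℕ) + 1 = a) (ha : a ∈ S)
    (hb : b ∈ S) (hab : a < b) : x ∈ S ∨ y ∈ S := by
  by_contra! ⟨hx, hy⟩
  have ha' : G.Adj (v a) (v x) ↔ ¬ G.Adj (v a) (v y) :=
    iff_not_comm.1 (hc.adj_pred_iff_not_adj hya (by omega) (by omega))
  have hb' : G.Adj (v b) (v y) ↔ G.Adj (v b) (v x) :=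
    hc.adj_iff_adj_of_not_pred (by omega) (by omega) (by omega) (by omega)
  have hy' : G.Adj (v y) (v a) ↔ G.Adj (v y) (v b) := hS.adj_iff_adj hy ha hb
  have hx' : G.Adj (v x) (v a) ↔ G.Adj (v x) (v b) := hS.adj_iff_adj hx ha hb
  refine iff_not_self (?_ : G.Adj (v a) (v y) ↔ _)
  calc G.Adj (v a) (v y) ↔ G.Adj (v y) (v b) := G.adj_comm _ _ |>.trans hy'
    _ ↔ G.Adj (v b) (v x) := G.adj_comm _ _ |>.trans hb'
    _ ↔ G.Adj (v a) (v x) := G.adj_comm _ _ |>.trans (hx'.symm.trans (G.adj_comm _ _))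
    _ ↔ ¬ G.Adj (v a) (v y) := ha'

theorem exists_mem_val_le_one (hc : GraphChain G I w m v) (hS : GraphModule (G.comap v) S)
    (hnt : S.Nontrivial) : ∃ a ∈ S, (a : ℕ) ≤ 1 := by
  obtain ⟨a, ha, hmin⟩ := wellFounded_lt.has_min S hnt.nonempty
  obtain ⟨b, hb, hba⟩ := hnt.exists_ne a
  refine ⟨a, ha, not_lt.1 fun h2a => ?_⟩
  have hab : a < b := lt_of_le_of_ne (not_lt.1 (hmin b hb)) hba.symm
  rcases hc.mem_or_mem_of_succ_succ hS (x := ⟨(a : ℕ) - 2, by omega⟩)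
    (y := ⟨(a : ℕ) - 1, by omega⟩) (by dsimp only; omega) (by dsimp only; omega) ha hb hab
    with h | h
  exacts [hmin _ h (Fin.lt_def.2 (by dsimp only; omega)),
    hmin _ h (Fin.lt_def.2 (by dsimp only; omega))]

end

theorem adj_one_zero_iff_of_not_isPrimeGraph {v : Fin (m + 4) → V}
    (hc : GraphChain G I w (m + 3) v) (hv : ¬ IsPrimeGraph (G.induce (Set.range v))) :
    G.Adj (v 1) (v 0) ↔ ¬ G.Adj (v (Fin.last (m + 3))) (v (Fin.last (m + 2)).castSucc) := by
  obtain ⟨S, hS, hnt, hne⟩ := exists_graphModule_comap_of_not_isPrimeGraph hv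
  have hlast := hc.last_mem hS hnt
  have hpred : ∀ k : Fin (m + 4), (k : ℕ) ≤ 1 → (G.Adj (v (Fin.last (m + 3))) (v k) ↔
      ¬ G.Adj (v (Fin.last (m + 3))) (v (Fin.last (m + 2)).castSucc)) := fun k hk =>
    iff_not_comm.1 (hc.adj_pred_iff_not_adj (by simp) (Fin.lt_def.2 (by simp; omega))
      (by simp; omega))
  have h01 : 0 ∈ S → 1 ∈ S → False := fun h0 h1 => hne <| Set.eq_univ_of_forall fun c => by
    rcases Fin.eq_zero_or_eq_succ c with rfl | ⟨c, rfl⟩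
    exacts [h0, hc.mem_of_le hS h0 h1 Fin.zero_lt_one (Fin.le_def.2 (by simp))]
  obtain ⟨a, ha, ha1⟩ := hc.exists_mem_val_le_one hS hnt
  obtain rfl | rfl : a = 0 ∨ a = 1 := by simp only [Fin.ext_iff, Fin.val_zero, Fin.val_one]; omega
  · have h1 : (1 : Fin (m + 4)) ∉ S := h01 ha
    calc G.Adj (v 1) (v 0) ↔ G.Adj (v 1) (v (Fin.last (m + 3))) := hS.adj_iff_adj h1 ha hlast
      _ ↔ _ := (G.adj_comm _ _).trans (hpred 1 (by simp))
  · have h0 : (0 : Fin (m + 4)) ∉ S := fun h0 => h01 h0 ha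
    calc G.Adj (v 1) (v 0) ↔ G.Adj (v 0) (v (Fin.last (m + 3))) :=
          (G.adj_comm _ _).trans (hS.adj_iff_adj h0 ha hlast)
      _ ↔ _ := (G.adj_comm _ _).trans (hpred 0 (by simp))

theorem comp_succAbove {v : Fin (m + 2) → V} (hc : GraphChain G I w (m + 1) v) (hm : 2 ≤ m)
    (p : Fin (m + 2)) (hp : p ≤ 1) :
    GraphChain G {(v ∘ p.succAbove) 0, (v ∘ p.succAbove) 1} ((v ∘ p.succAbove) (Fin.last m)) m
      (v ∘ p.succAbove) := by
  have hinj := hc.inj.comp (Fin.succAbove_right_injective (p := p))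
  have hp1 : (p : ℕ) ≤ 1 := by simpa [Fin.le_def] using hp
  have hval1 : ((1 : Fin (m + 1)) : ℕ) = 1 := by rw [Fin.val_one', Nat.mod_eq_of_lt (by omega)]
  refine ⟨hm, hinj, by simp, by simp, fun i hi => ?_, rfl, fun i hi => ?_⟩
  · simp only [Set.mem_insert_iff, Set.mem_singleton_iff, hinj.eq_iff, Fin.ext_iff, hval1,
      Fin.val_zero]
    omega
  rcases Nat.lt_or_ge 1 i with h2 | h1
  · have hlt : ∀ j : Fin (m + 1), (j : ℕ) < i → (p.succAbove j : ℕ) < p.succAbove i :=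
      fun j hj => Fin.strictMono_succAbove p (Fin.lt_def.2 hj)
    have hpred : ∀ j : Fin (m + 1), (j : ℕ) < i →
        ((p.succAbove j : ℕ) + 1 = p.succAbove i ↔ (j : ℕ) + 1 = i) := fun j hj => by
      simp only [Fin.val_succAbove]
      split_ifs <;> omega
    rcases hc.uniq (p.succAbove i) (by simp only [Fin.val_succAbove]; split_ifs <;> omega)
      with h | h
    exacts [.inl fun j hj => (h _ (hlt j hj)).trans (hpred j hj),
      .inr fun j hj => (h _ (hlt j hj)).trans (hpred j hj)]
  · have hj0 : ∀ j : Fin (m + 1), (j : ℕ) < i → j = 0 := fun j hj =>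
      Fin.ext (by rw [Fin.val_zero]; omega)
    by_cases hA : G.Adj ((v ∘ p.succAbove) i) ((v ∘ p.succAbove) 0)
    · exact .inl fun j hj => by rw [hj0 j hj]; exact iff_of_true hA (by simp; omega)
    · exact .inr fun j hj => by rw [hj0 j hj]; exact iff_of_true hA (by simp; omega)

theorem exists_isPrimeGraph_induce_range_comp_succAbove {v : Fin (m + 5) → V}
    (hc : GraphChain G I w (m + 4) v) :
    ∃ p : Fin (m + 5), p ≤ 1 ∧ IsPrimeGraph (G.induce (Set.range (v ∘ p.succAbove))) := by
  by_contra! h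
  have h0 := (hc.comp_succAbove (by omega) 0 (Fin.zero_le _)).adj_one_zero_iff_of_not_isPrimeGraph
    (h 0 (Fin.zero_le _))
  have h1 := (hc.comp_succAbove (by omega) 1 le_rfl).adj_one_zero_iff_of_not_isPrimeGraph
    (h 1 le_rfl)
  simp only [Function.comp_apply, Fin.zero_succAbove, Fin.one_succAbove_zero,
    Fin.one_succAbove_one, Fin.succ_zero_eq_one, Fin.succ_one_eq_two] at h0 h1
  rw [Fin.succAbove_of_le_castSucc _ _ (Fin.le_def.2 (by simp)),
    Fin.succAbove_of_le_castSucc _ _ (Fin.le_def.2 (by simp))] at h1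
  exact iff_not_self ((h0.trans h1.symm).symm.trans
    (hc.adj_pred_iff_not_adj (i := 2) (by rw [Fin.val_two]; simp)
      (Fin.lt_def.2 (by rw [Fin.val_two]; simp)) (by rw [Fin.val_two]; simp)))

end GraphChain

theorem statement10 (G : SimpleGraph V) (t : ℕ) (ht : 3 < t) (I : Set V) (w : V)
    (v : Fin (t + 1) → V) (hc : GraphChain G I w t v) :
    ∃ v' : Fin (t - 1 + 1) → V,
      GraphChain G {v' 0, v' 1} (v' (Fin.last (t - 1))) (t - 1) v' ∧
      Set.range v' ⊆ Set.range v ∧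
      IsPrimeGraph (G.induce (Set.range v')) := by
  obtain ⟨m, rfl⟩ : ∃ m, t = m + 4 := ⟨t - 4, by omega⟩
  obtain ⟨p, hp, hprime⟩ := hc.exists_isPrimeGraph_induce_range_comp_succAbove
  exact ⟨v ∘ p.succAbove, hc.comp_succAbove (by omega) p hp, Set.range_comp_subset_range _ _,
    hprime⟩
end

section
/- Suppose G is an infinite prime graph that is edge-stable (omits half-graphs of some fixed finite height), such that for some n every three distinct vertices admit a chain of length at most n between the first two and the third, and suppose G contains an infinite induced perfect matching. Then G contains, as an induced subgraph, one of the following or the complement of one of the following: the 1-subdivision K^{(1)}_{1,ω} of the infinite star K_{1,ω}, the line graph L(K_{2,ω}), or a spider with infinitely many legs. -/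
variable {V : Type*}

def HasThinSpider (G : SimpleGraph V) (ι : Type*) : Prop :=
  ∃ a b : ι → V, Function.Injective a ∧ Function.Injective b ∧ (∀ i j, a i ≠ b j) ∧
    (∀ i j, i ≠ j → ¬ G.Adj (a i) (a j)) ∧ (∀ i j, i ≠ j → G.Adj (b i) (b j)) ∧
    (∀ i j, G.Adj (a i) (b j) ↔ i = j)

def HasThickSpider (G : SimpleGraph V) (ι : Type*) : Prop :=
  ∃ a b : ι → V, Function.Injective a ∧ Function.Injective b ∧ (∀ i j, a i ≠ b j) ∧
    (∀ i j, i ≠ j → ¬ G.Adj (a i) (a j)) ∧ (∀ i j, i ≠ j → G.Adj (b i) (b j)) ∧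
    (∀ i j, G.Adj (a i) (b j) ↔ i ≠ j)

def HasSpider (G : SimpleGraph V) (ι : Type*) : Prop :=
  HasThinSpider G ι ∨ HasThickSpider G ι

def HasHalfGraph (G : SimpleGraph V) (ι : Type*) [Preorder ι] : Prop :=
  ∃ a b : ι → V, Function.Injective a ∧ Function.Injective b ∧ (∀ i j, a i ≠ b j) ∧
    (∀ i j, G.Adj (a i) (b j) ↔ i ≤ j)

def HasBipartiteHalfGraph (G : SimpleGraph V) (ι : Type*) [Preorder ι] : Prop :=
  ∃ a b : ι → V, Function.Injective a ∧ Function.Injective b ∧ (∀ i j, a i ≠ b j) ∧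
    (∀ i j, i ≠ j → ¬ G.Adj (a i) (a j)) ∧ (∀ i j, i ≠ j → ¬ G.Adj (b i) (b j)) ∧
    (∀ i j, G.Adj (a i) (b j) ↔ i ≤ j)

def HasHalfSplit (G : SimpleGraph V) (ι : Type*) [Preorder ι] : Prop :=
  ∃ a b : ι → V, Function.Injective a ∧ Function.Injective b ∧ (∀ i j, a i ≠ b j) ∧
    (∀ i j, i ≠ j → ¬ G.Adj (a i) (a j)) ∧ (∀ i j, i ≠ j → G.Adj (b i) (b j)) ∧
    (∀ i j, G.Adj (a i) (b j) ↔ i ≤ j)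

def HasMatching (G : SimpleGraph V) (ι : Type*) : Prop :=
  ∃ a b : ι → V, Function.Injective a ∧ Function.Injective b ∧ (∀ i j, a i ≠ b j) ∧
    (∀ i j, i ≠ j → ¬ G.Adj (a i) (a j)) ∧ (∀ i j, i ≠ j → ¬ G.Adj (b i) (b j)) ∧
    (∀ i j, G.Adj (a i) (b j) ↔ i = j)

def HasHSplitI (G : SimpleGraph V) (n : ℕ) : Prop :=
  ∃ (a b : Fin n → V) (c : V), Function.Injective a ∧ Function.Injective b ∧
    (∀ i j, a i ≠ b j) ∧ (∀ i, c ≠ a i) ∧ (∀ j, c ≠ b j) ∧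
    (∀ i j, i ≠ j → ¬ G.Adj (a i) (a j)) ∧ (∀ i j, i ≠ j → G.Adj (b i) (b j)) ∧
    (∀ i j, G.Adj (a i) (b j) ↔ i ≤ j) ∧
    (∀ i, G.Adj c (a i)) ∧ (∀ j, ¬ G.Adj c (b j))

def HasHStar (G : SimpleGraph V) (n : ℕ) : Prop :=
  ∃ (a b : Fin n → V) (c : V), Function.Injective a ∧ Function.Injective b ∧
    (∀ i j, a i ≠ b j) ∧ (∀ i, c ≠ a i) ∧ (∀ j, c ≠ b j) ∧
    (∀ i j, i ≠ j → ¬ G.Adj (a i) (a j)) ∧ (∀ i j, i ≠ j → G.Adj (b i) (b j)) ∧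
    (∀ i j, G.Adj (a i) (b j) ↔ i ≤ j) ∧
    (∀ i, G.Adj c (a i) ↔ (i : ℕ) = 0) ∧ (∀ j, ¬ G.Adj c (b j))

def HasSubdivStar (G : SimpleGraph V) (ι : Type*) : Prop :=
  ∃ (c : V) (s l : ι → V), Function.Injective s ∧ Function.Injective l ∧
    (∀ i j, s i ≠ l j) ∧ (∀ i, c ≠ s i) ∧ (∀ i, c ≠ l i) ∧
    (∀ i, G.Adj c (s i)) ∧ (∀ i, ¬ G.Adj c (l i)) ∧
    (∀ i j, i ≠ j → ¬ G.Adj (s i) (s j)) ∧ (∀ i j, i ≠ j → ¬ G.Adj (l i) (l j)) ∧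
    (∀ i j, G.Adj (s i) (l j) ↔ i = j)

def HasLineK2 (G : SimpleGraph V) (ι : Type*) : Prop :=
  ∃ e : Fin 2 → ι → V, Function.Injective (fun p : Fin 2 × ι => e p.1 p.2) ∧
    ∀ k k' i i', (k, i) ≠ (k', i') →
      (G.Adj (e k i) (e k' i') ↔ (k = k' ∨ i = i'))



/-!
Fix an infinite induced matching `(a i, b i)` and, for every `i ≥ 1`, a chain of length at most `n`
from the edge `{a i, b i}` to `a 0`; along a subsequence all these chains have the same length.
Walking along the chains level by level, we keep an induced matching between the current level
and an earlier one. The next vertex of each chain sees exactly one end of its matching edge, and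
infinite Ramsey applied to the adjacencies between the next level and the matching yields either
one of the unavoidable graphs, or a half graph (excluded by edge-stability), or an induced matching
one level further up. The matching cannot reach the last level, where every chain ends at `a 0`.
-/

open Function

theorem Set.Infinite.exists_infinite_inter_preimage_singleton {α F : Type*} [Finite F]
    {A : Set α} (hA : A.Infinite) (f : α → F) : ∃ e, (A ∩ f ⁻¹' {e}).Infinite := by
  by_contra! h
  exact hA ((Set.finite_iUnion h).subset fun y hy => Set.mem_iUnion.2 ⟨f y, hy, rfl⟩)

theorem Set.Infinite.exists_strictMono_mem {A : Set ℕ} (hA : A.Infinite) :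
    ∃ g : ℕ → ℕ, StrictMono g ∧ ∀ i, g i ∈ A :=
  ⟨Nat.nth (· ∈ A), Nat.nth_strictMono hA, Nat.nth_mem_of_infinite hA⟩

theorem exists_strictMono_forall_eq {F : Type*} [Finite F] (f : ℕ → F) :
    ∃ g : ℕ → ℕ, StrictMono g ∧ ∃ e, ∀ i, f (g i) = e := by
  obtain ⟨e, he⟩ := Set.infinite_univ.exists_infinite_inter_preimage_singleton f
  obtain ⟨g, hg, hgA⟩ := he.exists_strictMono_mem
  exact ⟨g, hg, e, fun i => (hgA i).2⟩

theorem exists_strictMono_forall_lt_eq {F : Type*} [Finite F] (c : ℕ → ℕ → F) :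
    ∃ g : ℕ → ℕ, StrictMono g ∧ ∃ e, ∀ i j, i < j → c (g i) (g j) = e := by
  have hnext : ∀ A : {A : Set ℕ // A.Infinite}, ∃ B : {B : Set ℕ // B.Infinite},
      B.1 ⊆ A.1 ∩ Set.Ioi (sInf A.1) ∧ ∃ e, ∀ y ∈ B.1, c (sInf A.1) y = e := by
    rintro ⟨A, hA⟩
    obtain ⟨e, he⟩ := (hA.sdiff (Set.finite_Iic (sInf A))).exists_infinite_inter_preimage_singleton
      (c (sInf A))
    exact ⟨⟨_, he⟩, fun y hy => ⟨hy.1.1, Set.mem_Ioi.2 (not_le.1 hy.1.2)⟩, e, fun y hy => hy.2⟩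
  choose next hsub e he using hnext
  let A : ℕ → {A : Set ℕ // A.Infinite} := fun k => Nat.rec ⟨_, Set.infinite_univ⟩ (fun _ => next) k
  have hA : Antitone fun k => (A k).1 :=
    antitone_nat_of_succ_le fun k => (hsub (A k)).trans Set.inter_subset_left
  have hmem : ∀ k, sInf (A k).1 ∈ (A k).1 := fun k => Nat.sInf_mem (A k).2.nonempty
  have hc : ∀ i j, i < j → c (sInf (A i).1) (sInf (A j).1) = e (A i) := fun i j hij =>
    he (A i) _ (hA (Nat.succ_le_of_lt hij) (hmem j))
  have hmono : StrictMono fun k => sInf (A k).1 :=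
    strictMono_nat_of_lt_succ fun k => (hsub (A k) (hmem (k + 1))).2
  obtain ⟨g, hg, e₀, he₀⟩ := exists_strictMono_forall_eq fun k => e (A k)
  exact ⟨_, hmono.comp hg, e₀, fun i j hij => (hc _ _ (hg hij)).trans (he₀ i)⟩

namespace SimpleGraph

variable {ι : Type*} {G : SimpleGraph V}

theorem injective_of_adj_iff_eq {x w : ι → V} (h : ∀ i j, G.Adj (x i) (w j) ↔ i = j) :
    Injective x := fun i j hij => (h i j).1 (hij ▸ (h j j).2 rfl)

theorem injective_of_adj_iff_ne {x w : ι → V} (h : ∀ i j, G.Adj (x i) (w j) ↔ i ≠ j) :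
    Injective x := fun i j hij => by_contra fun hne => ((h j j).1 (hij ▸ (h i j).2 hne)) rfl

theorem ne_of_adj_self {x w : ι → V} (hx : ∀ i j, i ≠ j → ¬ G.Adj (x i) (x j))
    (h : ∀ i, G.Adj (x i) (w i)) (i j : ι) : x i ≠ w j := by
  rintro hij
  rcases eq_or_ne j i with rfl | hji
  · exact (h j).ne hij
  · exact hx j i hji (hij ▸ h j)

theorem ne_of_adj_iff_ne [Nontrivial ι] {x w : ι → V} (hx : ∀ i j, i ≠ j → ¬ G.Adj (x i) (x j))
    (h : ∀ i j, G.Adj (x i) (w j) ↔ i ≠ j) (i j : ι) : x i ≠ w j := by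
  rintro hij
  rcases eq_or_ne i j with rfl | hne
  · obtain ⟨k, hk⟩ := exists_ne i
    exact hx k i hk (hij ▸ (h k i).2 hk)
  · exact ((h i j).2 hne).ne hij

theorem adj_iff_of_forall_lt_adj_iff {w : ℕ → V} {P : Prop}
    (h : ∀ i j, i < j → (G.Adj (w i) (w j) ↔ P)) (i j : ℕ) (hij : i ≠ j) :
    G.Adj (w i) (w j) ↔ P := by
  rcases hij.lt_or_gt with hlt | hlt
  exacts [h i j hlt, (adj_comm _ _ _).trans (h j i hlt)]

end SimpleGraph

open SimpleGraph

section HalfGraph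

variable {G : SimpleGraph V}

theorem HasHalfGraph.orderEmbedding {ι κ : Type*} [Preorder ι] [Preorder κ]
    (h : HasHalfGraph G ι) (f : κ ↪o ι) : HasHalfGraph G κ := by
  obtain ⟨a, b, ha, hb, hab, hadj⟩ := h
  exact ⟨a ∘ f, b ∘ f, ha.comp f.injective, hb.comp f.injective, fun _ _ => hab _ _,
    fun _ _ => (hadj _ _).trans f.le_iff_le⟩

/-- Comparing `a (2 * i)` with `b (2 * j + 1)` avoids the diagonal, on which nothing is assumed. -/
theorem HasHalfGraph.of_adj_iff_lt {a b : ℕ → V} (ha : Injective a) (hb : Injective b)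
    (hab : ∀ i j, i ≠ j → a i ≠ b j) (hadj : ∀ i j, i ≠ j → (G.Adj (a i) (b j) ↔ i < j)) :
    HasHalfGraph G ℕ := by
  refine ⟨fun i => a (2 * i), fun j => b (2 * j + 1), ha.comp fun i j h => by omega,
    hb.comp fun i j h => by omega, fun i j => hab _ _ (by omega), fun i j => ?_⟩
  rw [hadj _ _ (by omega)]
  omega

theorem iff_of_not_hasHalfGraph (hG : ¬ HasHalfGraph G ℕ) {x w : ℕ → V} {P Q : Prop}
    (hx : Injective x) (hw : Injective w) (hxw : ∀ i j, i ≠ j → x i ≠ w j)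
    (hP : ∀ i j, i < j → (G.Adj (x i) (w j) ↔ P)) (hQ : ∀ i j, i < j → (G.Adj (x j) (w i) ↔ Q)) :
    P ↔ Q := by
  by_contra hPQ
  by_cases hp : P
  · have hq : ¬ Q := fun hq => hPQ (iff_of_true hp hq)
    refine hG (HasHalfGraph.of_adj_iff_lt hx hw hxw fun i j hij => ?_)
    rcases hij.lt_or_gt with h | h
    · exact iff_of_true ((hP i j h).2 hp) h
    · exact iff_of_false (fun hadj => hq ((hQ j i h).1 hadj)) h.not_gt
  · have hq : Q := by_contra fun hq => hPQ (iff_of_false hp hq)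
    refine hG (HasHalfGraph.of_adj_iff_lt hw hx (fun i j hij => (hxw j i hij.symm).symm)
      fun i j hij => ?_)
    rw [adj_comm]
    rcases hij.lt_or_gt with h | h
    · exact iff_of_true ((hQ i j h).2 hq) h
    · exact iff_of_false (fun hadj => hp ((hP j i h).1 hadj)) h.not_gt

end HalfGraph

structure IsInducedMatching {ι : Type*} (G : SimpleGraph V) (x y : ι → V) : Prop where
  not_adj_left : ∀ i j, i ≠ j → ¬ G.Adj (x i) (x j)
  not_adj_right : ∀ i j, i ≠ j → ¬ G.Adj (y i) (y j)
  adj_iff : ∀ i j, G.Adj (x i) (y j) ↔ i = j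

namespace IsInducedMatching

variable {ι : Type*} {G : SimpleGraph V} {x y : ι → V}

theorem symm (h : IsInducedMatching G x y) : IsInducedMatching G y x :=
  ⟨h.not_adj_right, h.not_adj_left, fun i j => by rw [adj_comm, h.adj_iff, eq_comm]⟩

theorem injective_left (h : IsInducedMatching G x y) : Injective x :=
  injective_of_adj_iff_eq h.adj_iff

theorem injective_right (h : IsInducedMatching G x y) : Injective y :=
  h.symm.injective_left

theorem comp {κ : Type*} (h : IsInducedMatching G x y) {g : κ → ι} (hg : Injective g) :
    IsInducedMatching G (x ∘ g) (y ∘ g) :=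
  ⟨fun _ _ hij => h.not_adj_left _ _ (hg.ne hij), fun _ _ hij => h.not_adj_right _ _ (hg.ne hij),
    fun _ _ => (h.adj_iff _ _).trans hg.eq_iff⟩

theorem of_forall_or (h : IsInducedMatching G x y) {x' y' : ι → V}
    (hxy : ∀ i, x' i = x i ∧ y' i = y i ∨ x' i = y i ∧ y' i = x i) :
    IsInducedMatching G x' y' := by
  have hne : ∀ i j, i ≠ j → ∀ u ∈ ({x i, y i} : Set V), ∀ u' ∈ ({x j, y j} : Set V),
      ¬ G.Adj u u' := by
    rintro i j hij u (rfl | rfl) u' (rfl | rfl)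
    · exact h.not_adj_left i j hij
    · exact fun hadj => hij ((h.adj_iff i j).1 hadj)
    · exact fun hadj => hij ((h.adj_iff j i).1 hadj.symm).symm
    · exact h.not_adj_right i j hij
  have hmem : ∀ i, x' i ∈ ({x i, y i} : Set V) ∧ y' i ∈ ({x i, y i} : Set V) := fun i => by
    rcases hxy i with ⟨h1, h2⟩ | ⟨h1, h2⟩ <;> simp [h1, h2]
  refine ⟨fun i j hij => hne i j hij _ (hmem i).1 _ (hmem j).1,
    fun i j hij => hne i j hij _ (hmem i).2 _ (hmem j).2, fun i j => ?_⟩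
  rcases eq_or_ne i j with rfl | hij
  · rcases hxy i with ⟨h1, h2⟩ | ⟨h1, h2⟩
    · simp [h1, h2, (h.adj_iff i i).2 rfl]
    · simp [h1, h2, ((h.adj_iff i i).2 rfl).symm]
  · exact iff_of_false (hne i j hij _ (hmem i).1 _ (hmem j).2) hij

end IsInducedMatching

def HasUnavoidableInducedSubgraph (G : SimpleGraph V) : Prop :=
  (HasSubdivStar G ℕ ∨ HasSubdivStar Gᶜ ℕ) ∨
    (HasLineK2 G ℕ ∨ HasLineK2 Gᶜ ℕ) ∨
    (HasSpider G ℕ ∨ HasSpider Gᶜ ℕ)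

section Outcomes

variable {ι : Type*} {G : SimpleGraph V} {x w : ι → V}

theorem HasSubdivStar.of_apex [Nontrivial ι] {y : ι → V} (h : IsInducedMatching G x y) (z : V)
    (hzx : ∀ i, G.Adj z (x i)) (hzy : ∀ i, ¬ G.Adj z (y i)) : HasSubdivStar G ι := by
  refine ⟨z, x, y, h.injective_left, h.injective_right,
    ne_of_adj_self h.not_adj_left fun i => (h.adj_iff i i).2 rfl, fun i => (hzx i).ne,
    fun i hzi => ?_, hzx, hzy, h.not_adj_left, h.not_adj_right, h.adj_iff⟩
  obtain ⟨j, hji⟩ := exists_ne i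
  exact hji ((h.adj_iff j i).1 (hzi ▸ hzx j).symm)

theorem HasThinSpider.of_adj_iff_eq (hx : ∀ i j, i ≠ j → ¬ G.Adj (x i) (x j))
    (hw : ∀ i j, i ≠ j → G.Adj (w i) (w j)) (hxw : ∀ i j, G.Adj (x i) (w j) ↔ i = j) :
    HasThinSpider G ι :=
  ⟨x, w, injective_of_adj_iff_eq hxw,
    injective_of_adj_iff_eq (G := G) (w := x) fun i j => by rw [adj_comm, hxw, eq_comm],
    ne_of_adj_self hx fun i => (hxw i i).2 rfl, hx, hw, hxw⟩

theorem HasThickSpider.of_adj_iff_ne [Nontrivial ι] (hx : ∀ i j, i ≠ j → ¬ G.Adj (x i) (x j))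
    (hw : ∀ i j, i ≠ j → G.Adj (w i) (w j)) (hxw : ∀ i j, G.Adj (x i) (w j) ↔ i ≠ j) :
    HasThickSpider G ι :=
  ⟨x, w, injective_of_adj_iff_ne hxw,
    injective_of_adj_iff_ne (G := G) (w := x) fun i j => by rw [adj_comm, hxw, ne_comm],
    ne_of_adj_iff_ne hx hxw, hx, hw, hxw⟩

theorem HasLineK2.compl_of_adj_iff_ne [Nontrivial ι] (hx : ∀ i j, i ≠ j → ¬ G.Adj (x i) (x j))
    (hw : ∀ i j, i ≠ j → ¬ G.Adj (w i) (w j)) (hxw : ∀ i j, G.Adj (x i) (w j) ↔ i ≠ j) :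
    HasLineK2 Gᶜ ι := by
  have hxinj := injective_of_adj_iff_ne hxw
  have hwinj := injective_of_adj_iff_ne (G := G) (w := x) fun i j => by rw [adj_comm, hxw, ne_comm]
  have hne := ne_of_adj_iff_ne hx hxw
  have hx' : ∀ i j, ¬ G.Adj (x i) (x j) := fun i j => by
    rcases eq_or_ne i j with rfl | hij
    exacts [G.irrefl, hx i j hij]
  have hw' : ∀ i j, ¬ G.Adj (w i) (w j) := fun i j => by
    rcases eq_or_ne i j with rfl | hij
    exacts [G.irrefl, hw i j hij]
  have hinj : Injective fun p : Fin 2 × ι => ![x, w] p.1 p.2 := by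
    rintro ⟨k, i⟩ ⟨k', i'⟩ h
    fin_cases k <;> fin_cases k'
    · exact Prod.ext rfl (hxinj h)
    · exact absurd h (hne i i')
    · exact absurd h.symm (hne i' i)
    · exact Prod.ext rfl (hwinj h)
  refine ⟨![x, w], hinj, fun k k' i i' hkk' => ?_⟩
  rw [compl_adj, and_iff_right (hinj.ne hkk')]
  fin_cases k <;> fin_cases k' <;> simp [hx', hw', hxw, adj_comm, eq_comm]

end Outcomes

section Step

variable {G : SimpleGraph V}

theorem hasUnavoidableInducedSubgraph_or_isInducedMatching_of_homogeneous
    (hG : ¬ HasHalfGraph G ℕ) {x y w : ℕ → V} {t p q r s : Prop}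
    (hM : IsInducedMatching G x y) (hw : Injective w)
    (hwx : ∀ i, G.Adj (w i) (x i)) (hwy : ∀ i, ¬ G.Adj (w i) (y i))
    (ht : ∀ i j, i < j → (G.Adj (w i) (w j) ↔ t))
    (hp : ∀ i j, i < j → (G.Adj (x i) (w j) ↔ p)) (hq : ∀ i j, i < j → (G.Adj (x j) (w i) ↔ q))
    (hr : ∀ i j, i < j → (G.Adj (y i) (w j) ↔ r)) (hs : ∀ i j, i < j → (G.Adj (y j) (w i) ↔ s)) :
    HasUnavoidableInducedSubgraph G ∨ IsInducedMatching G w x := by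
  have hxw := ne_of_adj_self hM.not_adj_left fun i => (hwx i).symm
  have hyw : ∀ i j, i ≠ j → y i ≠ w j := fun i j hij hyw =>
    hij ((hM.adj_iff j i).1 (hyw ▸ hwx j).symm).symm
  have hpq := iff_of_not_hasHalfGraph hG hM.injective_left hw (fun i j _ => hxw i j) hp hq
  have hrs := iff_of_not_hasHalfGraph hG hM.injective_right hw hyw hr hs
  have hxw' : ∀ i j, i ≠ j → (G.Adj (x i) (w j) ↔ p) := fun i j hij => by
    rcases hij.lt_or_gt with hlt | hlt
    exacts [hp i j hlt, (hq j i hlt).trans hpq.symm]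
  have hyw' : ∀ i j, i ≠ j → (G.Adj (y i) (w j) ↔ r) := fun i j hij => by
    rcases hij.lt_or_gt with hlt | hlt
    exacts [hr i j hlt, (hs j i hlt).trans hrs.symm]
  have hww := adj_iff_of_forall_lt_adj_iff ht
  by_cases hr' : r
  · have hywne : ∀ i j, G.Adj (y i) (w j) ↔ i ≠ j := fun i j => by
      rcases eq_or_ne i j with rfl | hij
      · exact iff_of_false (fun h => hwy i h.symm) (not_not.2 rfl)
      · exact iff_of_true ((hyw' i j hij).2 hr') hij
    by_cases ht' : t
    · exact .inl <| .inr <| .inr <| .inl <| .inr <|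
        HasThickSpider.of_adj_iff_ne hM.not_adj_right (fun i j hij => (hww i j hij).2 ht') hywne
    · exact .inl <| .inr <| .inl <| .inr <| HasLineK2.compl_of_adj_iff_ne hM.not_adj_right
        (fun i j hij h => ht' ((hww i j hij).1 h)) hywne
  by_cases hp' : p
  · refine .inl <| .inl <| .inl <| HasSubdivStar.of_apex hM (w 0) (fun i => ?_) (fun i => ?_)
    · rcases eq_or_ne i 0 with rfl | hi
      exacts [hwx 0, ((hxw' i 0 hi).2 hp').symm]
    · rcases eq_or_ne i 0 with rfl | hi
      exacts [hwy 0, fun h => hr' ((hyw' i 0 hi).1 h.symm)]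
  have hxweq : ∀ i j, G.Adj (x i) (w j) ↔ i = j := fun i j => by
    rcases eq_or_ne i j with rfl | hij
    · exact iff_of_true (hwx i).symm rfl
    · exact iff_of_false (fun h => hp' ((hxw' i j hij).1 h)) hij
  by_cases ht' : t
  · exact .inl <| .inr <| .inr <| .inl <| .inl <|
      HasThinSpider.of_adj_iff_eq hM.not_adj_left (fun i j hij => (hww i j hij).2 ht') hxweq
  · exact .inr ⟨fun i j hij h => ht' ((hww i j hij).1 h), hM.not_adj_left,
      fun i j => by rw [adj_comm, hxweq, eq_comm]⟩

theorem hasUnavoidableInducedSubgraph_or_exists_isInducedMatching (hG : ¬ HasHalfGraph G ℕ)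
    {x y w : ℕ → V} (hM : IsInducedMatching G x y) (hwx : ∀ i, G.Adj (w i) (x i))
    (hwy : ∀ i, ¬ G.Adj (w i) (y i)) :
    HasUnavoidableInducedSubgraph G ∨
      ∃ g : ℕ → ℕ, StrictMono g ∧ IsInducedMatching G (w ∘ g) (x ∘ g) := by
  obtain ⟨g, hg, ⟨e, t, p, q, r, s⟩, hc⟩ := exists_strictMono_forall_lt_eq fun i j =>
    (w i = w j, G.Adj (w i) (w j), G.Adj (x i) (w j), G.Adj (x j) (w i), G.Adj (y i) (w j),
      G.Adj (y j) (w i))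
  have hc' : ∀ i j, i < j → (w (g i) = w (g j) ↔ e) ∧ (G.Adj (w (g i)) (w (g j)) ↔ t) ∧
      (G.Adj (x (g i)) (w (g j)) ↔ p) ∧ (G.Adj (x (g j)) (w (g i)) ↔ q) ∧
      (G.Adj (y (g i)) (w (g j)) ↔ r) ∧ (G.Adj (y (g j)) (w (g i)) ↔ s) := fun i j hij => by
    simpa only [Prod.mk.injEq, ← iff_eq_eq] using hc i j hij
  have hMg := hM.comp hg.injective
  by_cases he : e
  · have hw0 : ∀ i, w (g i) = w (g 0) := fun i => by
      rcases Nat.eq_zero_or_pos i with rfl | hi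
      exacts [rfl, ((hc' 0 i hi).1.2 he).symm]
    refine .inl <| .inl <| .inl <| HasSubdivStar.of_apex hMg (w (g 0)) (fun i => ?_) (fun i => ?_)
    exacts [hw0 i ▸ hwx (g i), hw0 i ▸ hwy (g i)]
  refine (hasUnavoidableInducedSubgraph_or_isInducedMatching_of_homogeneous hG hMg
    (Injective.of_lt_imp_ne fun i j hij h => he ((hc' i j hij).1.1 h))
    (fun i => hwx (g i)) (fun i => hwy (g i)) (fun i j hij => (hc' i j hij).2.1)
    (fun i j hij => (hc' i j hij).2.2.1) (fun i j hij => (hc' i j hij).2.2.2.1)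
    (fun i j hij => (hc' i j hij).2.2.2.2.1) (fun i j hij => (hc' i j hij).2.2.2.2.2)).imp_right
    fun h => ⟨g, hg, h⟩

theorem hasUnavoidableInducedSubgraph_or_exists_isInducedMatching_of_adj_xor
    (hG : ¬ HasHalfGraph G ℕ) {x y w : ℕ → V} (hM : IsInducedMatching G x y)
    (hw : ∀ i, G.Adj (w i) (x i) ∧ ¬ G.Adj (w i) (y i) ∨ ¬ G.Adj (w i) (x i) ∧ G.Adj (w i) (y i)) :
    HasUnavoidableInducedSubgraph G ∨ ∃ g : ℕ → ℕ, StrictMono g ∧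
      (IsInducedMatching G (w ∘ g) (x ∘ g) ∨ IsInducedMatching G (w ∘ g) (y ∘ g)) := by
  obtain ⟨g, hg, P, hP⟩ := exists_strictMono_forall_eq fun i => G.Adj (w i) (x i)
  have hMg := hM.comp hg.injective
  by_cases hP' : P
  · have hwx : ∀ i, G.Adj (w (g i)) (x (g i)) := fun i => (hP i).symm ▸ hP'
    refine (hasUnavoidableInducedSubgraph_or_exists_isInducedMatching hG hMg hwx fun i => ?_
      ).imp_right fun ⟨g', hg', h⟩ => ⟨g ∘ g', hg.comp hg', .inl h⟩
    exact ((hw (g i)).resolve_right fun h => h.1 (hwx i)).2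
  · have hwx : ∀ i, ¬ G.Adj (w (g i)) (x (g i)) := fun i => (hP i).symm ▸ hP'
    refine (hasUnavoidableInducedSubgraph_or_exists_isInducedMatching hG hMg.symm (fun i => ?_)
      hwx).imp_right fun ⟨g', hg', h⟩ => ⟨g ∘ g', hg.comp hg', .inr h⟩
    exact ((hw (g i)).resolve_left fun h => hwx i h.1).2

end Step

namespace GraphChain

variable {G : SimpleGraph V} {I : Set V} {w : V} {m : ℕ} {v : Fin (m + 1) → V}

theorem eq_or_eq {a b : V} (hv : GraphChain G {a, b} w m v) :
    v 1 = a ∧ v 0 = b ∨ v 1 = b ∧ v 0 = a := by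
  have h01 : v 0 ≠ v 1 := hv.inj.ne fun h => by
    have := congrArg Fin.val h
    rw [Fin.val_zero, Fin.val_one', Nat.mod_eq_of_lt (by linarith [hv.two_le])] at this
    exact absurd this zero_ne_one
  rcases hv.mem0 with h0 | h0 <;> rcases hv.mem1 with h1 | h1
  · exact absurd (h0.trans h1.symm) h01
  · exact .inr ⟨h1, h0⟩
  · exact .inl ⟨h1, h0⟩
  · exact absurd (h0.trans h1.symm) h01

theorem adj_xor (hv : GraphChain G I w m v) {s u t : Fin (m + 1)} (hut : u.val + 1 = t.val)
    (hst : s.val + 1 < t.val) :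
    G.Adj (v t) (v u) ∧ ¬ G.Adj (v t) (v s) ∨ ¬ G.Adj (v t) (v u) ∧ G.Adj (v t) (v s) := by
  rcases hv.uniq t (by omega) with h | h
  · exact .inl ⟨(h u (by omega)).2 hut, fun hadj => by have := (h s (by omega)).1 hadj; omega⟩
  · exact .inr ⟨(h u (by omega)).2 hut,
      by_contra fun hadj => by have := (h s (by omega)).1 hadj; omega⟩

end GraphChain

theorem exists_strictMono_graphChain {G : SimpleGraph V} {I : ℕ → Set V} {w : V} {n : ℕ}
    (h : ∀ i, ∃ m ≤ n, ∃ v : Fin (m + 1) → V, GraphChain G (I i) w m v) :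
    ∃ g : ℕ → ℕ, StrictMono g ∧ ∃ M, ∃ v : ℕ → Fin (M + 1) → V,
      ∀ i, GraphChain G (I (g i)) w M (v i) := by
  choose m hm v hv using h
  obtain ⟨g, hg, M, hgM⟩ := exists_strictMono_forall_eq fun i =>
    (⟨m i, Nat.lt_succ_of_le (hm i)⟩ : Fin (n + 1))
  have hv' : ∀ i, ∃ v' : Fin (M + 1) → V, GraphChain G (I (g i)) w M v' := fun i => by
    rw [← congrArg Fin.val (hgM i)]
    exact ⟨v (g i), hv (g i)⟩
  choose v' hv' using hv'
  exact ⟨g, hg, M, v', hv'⟩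

theorem hasUnavoidableInducedSubgraph_of_graphChain {G : SimpleGraph V} (hG : ¬ HasHalfGraph G ℕ)
    {a b : ℕ → V} (hM : IsInducedMatching G a b) {w : V} {m : ℕ} {v : ℕ → Fin (m + 1) → V}
    (hv : ∀ i, GraphChain G {a i, b i} w m (v i)) : HasUnavoidableInducedSubgraph G := by
  have hlevel : ∀ t : Fin (m + 1), 0 < t.val → HasUnavoidableInducedSubgraph G ∨
      ∃ g : ℕ → ℕ, StrictMono g ∧ ∃ s < t,
        IsInducedMatching G (fun i => v (g i) t) (fun i => v (g i) s) := by
    intro t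
    induction t using Fin.induction with
    | zero => exact fun h => absurd h (lt_irrefl 0)
    | succ t ih =>
      intro _
      rcases Nat.eq_zero_or_pos t.val with ht | ht
      · have h1 : t.succ = 1 := Fin.ext (by simp [ht, Nat.mod_eq_of_lt (by omega : 1 < m + 1)])
        exact .inr ⟨id, strictMono_id, 0, Fin.succ_pos t,
          hM.of_forall_or fun i => h1 ▸ (hv i).eq_or_eq⟩
      rcases ih ht with hout | ⟨g, hg, s, hs, hMs⟩
      · exact .inl hout
      refine (hasUnavoidableInducedSubgraph_or_exists_isInducedMatching_of_adj_xor hG hMs fun i =>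
        (hv (g i)).adj_xor (Fin.val_succ t).symm ?_).imp_right
        fun ⟨g', hg', h⟩ => ⟨g ∘ g', hg.comp hg', ?_⟩
      · have := Fin.lt_def.1 hs
        simp only [Fin.val_castSucc, Fin.val_succ] at this ⊢
        omega
      · rcases h with h | h
        exacts [⟨_, Fin.castSucc_lt_succ, h⟩, ⟨s, hs.trans Fin.castSucc_lt_succ, h⟩]
  rcases hlevel (Fin.last m) (by linarith [(hv 0).two_le, Fin.val_last m]) with
    hout | ⟨g, -, s, -, hMs⟩
  · exact hout
  · exact absurd (hMs.injective_left ((hv (g 0)).last_eq.trans (hv (g 1)).last_eq.symm))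
      zero_ne_one

theorem statement13_general (G : SimpleGraph V)
    (hstable : ∃ k : ℕ, ¬ HasHalfGraph G (Fin k))
    (hchain : ∃ n : ℕ, ∀ x1 x2 x3 : V, x1 ≠ x2 → x1 ≠ x3 → x2 ≠ x3 →
      ∃ m, m ≤ n ∧ ∃ v : Fin (m + 1) → V, GraphChain G {x1, x2} x3 m v)
    (hmatch : HasMatching G ℕ) :
    (HasSubdivStar G ℕ ∨ HasSubdivStar Gᶜ ℕ) ∨
    (HasLineK2 G ℕ ∨ HasLineK2 Gᶜ ℕ) ∨
    (HasSpider G ℕ ∨ HasSpider Gᶜ ℕ) := by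
  obtain ⟨k, hk⟩ := hstable
  have hG : ¬ HasHalfGraph G ℕ := fun h => hk (h.orderEmbedding (Fin.valOrderEmb k))
  obtain ⟨n, hn⟩ := hchain
  obtain ⟨a, b, ha, -, hab, hindep_a, hindep_b, hadj⟩ := hmatch
  obtain ⟨g, hg, M, v, hv⟩ := exists_strictMono_graphChain (I := fun i => {a (i + 1), b (i + 1)})
    fun i => hn (a (i + 1)) (b (i + 1)) (a 0) ((hadj _ _).2 rfl).ne (ha.ne (by omega))
      (hab 0 (i + 1)).symm
  exact hasUnavoidableInducedSubgraph_of_graphChain hG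
    ((IsInducedMatching.mk hindep_a hindep_b hadj).comp
      ((add_left_injective 1).comp hg.injective)) hv

theorem statement13 [Infinite V] (G : SimpleGraph V)
    (hprime : IsPrimeGraph G)
    (hstable : ∃ k : ℕ, ¬ HasHalfGraph G (Fin k))
    (hchain : ∃ n : ℕ, ∀ x1 x2 x3 : V, x1 ≠ x2 → x1 ≠ x3 → x2 ≠ x3 →
      ∃ m, m ≤ n ∧ ∃ v : Fin (m + 1) → V, GraphChain G {x1, x2} x3 m v)
    (hmatch : HasMatching G ℕ) :
    (HasSubdivStar G ℕ ∨ HasSubdivStar Gᶜ ℕ) ∨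
    (HasLineK2 G ℕ ∨ HasLineK2 Gᶜ ℕ) ∨
    (HasSpider G ℕ ∨ HasSpider Gᶜ ℕ) :=
  statement13_general G hstable hchain hmatch
end

section
/- Let n ≥ 3 and let G be a finite prime graph with at least 3 vertices. If there exist three distinct vertices x, y, z such that no chain of length at most n goes from {x,y} to z, then G contains a chain of length n inducing a prime subgraph. -/
/-!
The vertices reachable from `{x, y}` by a chain form a module: a vertex `u` outside it sees each
chain `v₀, v₁, …` uniformly, for if `vₖ` were the first vertex that `u` sees differently from
`v₀, …, vₖ₋₁`, then `v₀, …, vₖ, u` would be a chain. By primeness every vertex, in particular `z`,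
is reached, and by hypothesis only by chains `v₀, …, vₘ` with `m > n`.

Deleting `v₀` or `v₁` from `v₀, …, vₙ₊₁` leaves two chains of length `n`. If a chain `w₀, …, wₙ`
with `n ≥ 3` induces a non-prime subgraph, a nontrivial module of it is closed upwards from its
second element, so it contains `wₙ` and, by the chain condition, exactly one of `w₀, w₁`; either
way `w₁ ∼ w₀ ↔ wₙ ∼ w₀`. For both deleted chains this contradicts the chain condition at `v₂` and
at `vₙ₊₁`.
-/

variable {V : Type*}

/-- The chain `v₀, …, vₘ` as a sequence `ℕ → V` of which only `f 0, …, f m` matter.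
Unlike `GraphChain`, lengths `0` and `1` are allowed, so that every chain grows from the pair
`v₀, v₁`. The last field is the chain condition in the form: `vᵢ₊₁` sees all of `v₀, …, vᵢ₋₁`
in the opposite way to `vᵢ`. -/
structure NatChain (G : SimpleGraph V) (I : Set V) (m : ℕ) (f : ℕ → V) : Prop where
  injOn : Set.InjOn f (Set.Iic m)
  mem_zero : f 0 ∈ I
  mem_one : f 1 ∈ I
  not_mem : ∀ i, 2 ≤ i → i ≤ m → f i ∉ I
  adj_iff : ∀ i j, i + 1 ≤ m → j < i → (G.Adj (f (i + 1)) (f j) ↔ ¬ G.Adj (f (i + 1)) (f i))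

namespace NatChain

variable {G : SimpleGraph V} {I : Set V} {m : ℕ} {f : ℕ → V}

lemma pair {x y : V} (hxy : x ≠ y) :
    NatChain G {x, y} 1 (fun i => if i = 0 then x else y) where
  injOn i hi j hj hij := by
    simp only [Set.mem_Iic] at hi hj
    interval_cases i <;> interval_cases j <;> simp_all [eq_comm]
  mem_zero := by simp
  mem_one := by simp
  not_mem i h2 h1 := by omega
  adj_iff i j hi hj := by omega

lemma pref (h : NatChain G I m f) {k : ℕ} (hk : k ≤ m) : NatChain G I k f where
  injOn := h.injOn.mono (Set.Iic_subset_Iic.mpr hk)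
  mem_zero := h.mem_zero
  mem_one := h.mem_one
  not_mem i h2 hi := h.not_mem i h2 (hi.trans hk)
  adj_iff i j hi hj := h.adj_iff i j (hi.trans hk) hj

lemma two_le (h : NatChain G I m f) (hm : f m ∉ I) : 2 ≤ m := by
  by_contra! h2
  interval_cases m
  exacts [hm h.mem_zero, hm h.mem_one]

lemma adj_iff_adj (h : NatChain G I m f) {i j j' : ℕ} (hi : i + 1 ≤ m) (hj : j < i)
    (hj' : j' < i) : G.Adj (f (i + 1)) (f j) ↔ G.Adj (f (i + 1)) (f j') := by
  rw [h.adj_iff i j hi hj, h.adj_iff i j' hi hj']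

lemma snoc (h : NatChain G I m f) (hm : m ≠ 0) {u : V} (hu : u ∉ I)
    (hne : ∀ i ≤ m, f i ≠ u) (hadj : ∀ j < m, G.Adj u (f j) ↔ ¬ G.Adj u (f m)) :
    NatChain G I (m + 1) (Function.update f (m + 1) u) where
  injOn i hi j hj hij := by
    simp only [Set.mem_Iic] at hi hj
    rcases hi.eq_or_lt with rfl | hi <;> rcases hj.eq_or_lt with rfl | hj
    · rfl
    · simp only [Function.update_self, Function.update_of_ne hj.ne] at hij
      exact absurd hij.symm (hne j (by omega))
    · simp only [Function.update_self, Function.update_of_ne hi.ne] at hij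
      exact absurd hij (hne i (by omega))
    · simp only [Function.update_of_ne hi.ne, Function.update_of_ne hj.ne] at hij
      exact h.injOn (Set.mem_Iic.mpr (by omega)) (Set.mem_Iic.mpr (by omega)) hij
  mem_zero := by rw [Function.update_of_ne (by omega)]; exact h.mem_zero
  mem_one := by rw [Function.update_of_ne (by omega)]; exact h.mem_one
  not_mem i h2 hi := by
    rcases hi.eq_or_lt with rfl | hi
    · rwa [Function.update_self]
    · rw [Function.update_of_ne hi.ne]; exact h.not_mem i h2 (by omega)
  adj_iff i j hi hj := by
    rw [Function.update_of_ne (show j ≠ m + 1 by omega),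
      Function.update_of_ne (show i ≠ m + 1 by omega)]
    rcases hi.eq_or_lt with hi | hi
    · obtain rfl : i = m := by omega
      rw [Function.update_self]; exact hadj j hj
    · rw [Function.update_of_ne hi.ne]; exact h.adj_iff i j (by omega) hj

lemma skip (h : NatChain G I (m + 1) f) {c : ℕ} (hc : c ≤ 1) :
    NatChain G {f c, f 2} m (fun i => f (if i = 0 then c else i + 1)) where
  injOn i hi j hj hij := by
    simp only [Set.mem_Iic] at hi hj
    have := h.injOn (x₁ := if i = 0 then c else i + 1) (x₂ := if j = 0 then c else j + 1)
      (by simp only [Set.mem_Iic]; split_ifs <;> omega)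
      (by simp only [Set.mem_Iic]; split_ifs <;> omega) hij
    split_ifs at this <;> omega
  mem_zero := by simp
  mem_one := by simp
  not_mem i h2 hi hmem := by
    simp only [if_neg (show i ≠ 0 by omega), Set.mem_insert_iff, Set.mem_singleton_iff] at hmem
    rcases hmem with hmem | hmem <;>
      have := h.injOn (Set.mem_Iic.mpr (by omega)) (Set.mem_Iic.mpr (by omega)) hmem <;> omega
  adj_iff i j hi hj := by
    simp only [if_neg (show i + 1 ≠ 0 by omega), if_neg (show i ≠ 0 by omega)]
    exact h.adj_iff (i + 1) _ (by omega) (by split_ifs <;> omega)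

lemma toGraphChain (h : NatChain G I m f) (hm : 2 ≤ m) :
    GraphChain G I (f m) m (fun i => f i) where
  two_le := hm
  inj i j hij := Fin.ext (h.injOn (by simpa using i.is_le) (by simpa using j.is_le) hij)
  mem0 := h.mem_zero
  mem1 := by rw [Fin.val_one', Nat.mod_eq_of_lt (by omega)]; exact h.mem_one
  not_mem i h2 := h.not_mem i h2 i.is_le
  last_eq := rfl
  uniq := by
    rintro ⟨_ | i, hi⟩ hpos
    · simp at hpos
    by_cases hadj : G.Adj (f (i + 1)) (f i)
    · refine .inl fun ⟨j, _⟩ hj => ?_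
      rcases (Nat.lt_succ_iff.mp hj).eq_or_lt with rfl | hj
      · simpa using hadj
      · simpa [h.adj_iff i j (by omega) hj, hadj] using hj.ne
    · refine .inr fun ⟨j, _⟩ hj => ?_
      rcases (Nat.lt_succ_iff.mp hj).eq_or_lt with rfl | hj
      · simpa using hadj
      · simpa [h.adj_iff i j (by omega) hj, hadj] using hj.ne

end NatChain

def chainEnd (G : SimpleGraph V) (I : Set V) : Set V :=
  {u | ∃ m f, NatChain G I m f ∧ f m = u}

namespace NatChain

variable {G : SimpleGraph V} {I : Set V} {m : ℕ} {f : ℕ → V}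

lemma mem_chainEnd (h : NatChain G I m f) {i : ℕ} (hi : i ≤ m) : f i ∈ chainEnd G I :=
  ⟨i, f, h.pref hi, rfl⟩

lemma adj_iff_adj_zero_of_not_mem_chainEnd (h : NatChain G I m f) {u : V} (hu : u ∉ I)
    (hR : u ∉ chainEnd G I) {i : ℕ} (hi : i ≤ m) : G.Adj u (f i) ↔ G.Adj u (f 0) := by
  induction m generalizing i with
  | zero =>
    obtain rfl : i = 0 := by omega
    rfl
  | succ m ih =>
    have ih := @ih (h.pref m.le_succ)
    rcases hi.eq_or_lt with rfl | hi
    · by_contra hsplit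
      have hadj : ∀ j < m + 1, G.Adj u (f j) ↔ ¬ G.Adj u (f (m + 1)) := fun j hj => by
        rw [ih (by omega)]; tauto
      have hne : ∀ j ≤ m + 1, f j ≠ u := fun j hj he => hR (he ▸ h.mem_chainEnd hj)
      exact hR ⟨_, _, h.snoc m.succ_ne_zero hu hne hadj, Function.update_self ..⟩
    · exact ih (by omega)

end NatChain

lemma pair_subset_chainEnd {G : SimpleGraph V} {x y : V} (hxy : x ≠ y) :
    {x, y} ⊆ chainEnd G {x, y} := by
  have h := NatChain.pair (G := G) hxy
  rintro _ (rfl | rfl)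
  · simpa using h.mem_chainEnd (Nat.zero_le 1)
  · simpa using h.mem_chainEnd le_rfl

lemma graphModule_chainEnd {G : SimpleGraph V} {x y : V} (hxy : x ≠ y) :
    GraphModule G (chainEnd G {x, y}) := by
  intro u hu
  have huI : u ∉ ({x, y} : Set V) := fun h => hu (pair_subset_chainEnd hxy h)
  have hpair := (NatChain.pair (G := G) hxy).adj_iff_adj_zero_of_not_mem_chainEnd huI hu le_rfl
  simp only [one_ne_zero, if_false, if_true] at hpair
  have key : ∀ a ∈ chainEnd G {x, y}, G.Adj u a ↔ G.Adj u x := by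
    rintro a ⟨k, g, hg, rfl⟩
    rw [hg.adj_iff_adj_zero_of_not_mem_chainEnd huI hu le_rfl]
    rcases hg.mem_zero with h0 | h0
    · rw [h0]
    · rw [Set.mem_singleton_iff.mp h0, hpair]
  by_cases hux : G.Adj u x
  · exact .inl fun a ha => (key a ha).mpr hux
  · exact .inr fun a ha => mt (key a ha).mp hux

lemma chainEnd_eq_univ {G : SimpleGraph V} (hG : IsPrimeGraph G) {x y : V} (hxy : x ≠ y) :
    chainEnd G {x, y} = Set.univ :=
  (hG _ (graphModule_chainEnd hxy)).resolve_left fun hs =>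
    hxy (hs (pair_subset_chainEnd hxy (by simp)) (pair_subset_chainEnd hxy (by simp)))

def IsSeqModule (G : SimpleGraph V) (f : ℕ → V) (m : ℕ) (J : Set ℕ) : Prop :=
  ∀ k ≤ m, k ∉ J → ∀ i ∈ J, ∀ j ∈ J, (G.Adj (f k) (f i) ↔ G.Adj (f k) (f j))

lemma exists_isSeqModule_of_not_isPrimeGraph {G : SimpleGraph V} {f : ℕ → V} {m : ℕ}
    (hnp : ¬ IsPrimeGraph (G.induce (Set.range fun i : Fin (m + 1) => f i))) :
    ∃ J, IsSeqModule G f m J ∧ (∃ a ∈ J, ∃ b ∈ J, a < b ∧ b ≤ m) ∧ ∃ k ≤ m, k ∉ J := by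
  simp only [IsPrimeGraph, not_forall, not_or] at hnp
  obtain ⟨Y, hY, hsub, huniv⟩ := hnp
  refine ⟨{i | i ≤ m ∧ f i ∈ Subtype.val '' Y}, ?_, ?_, ?_⟩
  · rintro k hk hkJ i ⟨-, s, hs, hsi⟩ j ⟨-, t, ht, htj⟩
    rw [← hsi, ← htj]
    have hkY : ⟨f k, ⟨k, by omega⟩, rfl⟩ ∉ Y := fun hkY => hkJ ⟨hk, _, hkY, rfl⟩
    rcases hY _ hkY with hall | hall
    · exact iff_of_true (hall s hs) (hall t ht)
    · exact iff_of_false (hall s hs) (hall t ht)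
  · obtain ⟨s, hs, t, ht, hst⟩ := Set.not_subsingleton_iff.mp hsub
    obtain ⟨⟨a, ha⟩, has⟩ := s.2
    obtain ⟨⟨b, hb⟩, hbt⟩ := t.2
    have hmem_a : a ∈ {i | i ≤ m ∧ f i ∈ Subtype.val '' Y} := ⟨by omega, s, hs, has.symm⟩
    have hmem_b : b ∈ {i | i ≤ m ∧ f i ∈ Subtype.val '' Y} := ⟨by omega, t, ht, hbt.symm⟩
    have hab : a ≠ b := by
      rintro rfl
      exact hst (Subtype.ext (has.symm.trans hbt))
    rcases lt_or_gt_of_ne hab with hab | hab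
    · exact ⟨a, hmem_a, b, hmem_b, hab, by omega⟩
    · exact ⟨b, hmem_b, a, hmem_a, hab, by omega⟩
  · obtain ⟨s, hs⟩ := (Set.ne_univ_iff_exists_notMem _).mp huniv
    obtain ⟨⟨k, hk⟩, hks⟩ := s.2
    refine ⟨k, by omega, fun ⟨_, t, ht, htk⟩ => hs ?_⟩
    rwa [← Subtype.ext (htk.trans hks)]

namespace NatChain

variable {G : SimpleGraph V} {I : Set V} {m : ℕ} {f : ℕ → V} {J : Set ℕ}

lemma mem_of_isSeqModule (h : NatChain G I m f) (hJ : IsSeqModule G f m J) {a b c : ℕ}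
    (hab : a < b) (ha : a ∈ J) (hb : b ∈ J) (hbc : b ≤ c) (hc : c ≤ m) : c ∈ J := by
  induction c, hbc using Nat.le_induction with
  | base => exact hb
  | succ c hbc ih =>
    by_contra hc'
    have hsame := hJ (c + 1) hc hc' a ha c (ih (by omega))
    rw [h.adj_iff c a hc (by omega)] at hsame
    exact iff_not_self hsame.symm

lemma not_mem_add_two_of_isSeqModule (h : NatChain G I m f) (hJ : IsSeqModule G f m J)
    (hmJ : m ∈ J) {p : ℕ} (hp : p + 2 < m) (h0 : p ∉ J) (h1 : p + 1 ∉ J) : p + 2 ∉ J := by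
  intro h2
  have e1 := h.adj_iff (p + 1) p (by omega) (by omega)
  have e2 := hJ p (by omega) h0 (p + 2) h2 m hmJ
  have e3 := hJ (p + 1) (by omega) h1 (p + 2) h2 m hmJ
  obtain ⟨m, rfl⟩ : ∃ m', m = m' + 1 := ⟨m - 1, by omega⟩
  have e4 := h.adj_iff_adj (j := p) (j' := p + 1) le_rfl (by omega) (by omega)
  rw [G.adj_comm (f p), G.adj_comm (f p)] at e2
  rw [G.adj_comm (f (p + 1)), G.adj_comm (f (p + 1))] at e3
  tauto

lemma adj_one_zero_iff_of_not_isPrimeGraph (h : NatChain G I m f) (hm : 3 ≤ m)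
    (hnp : ¬ IsPrimeGraph (G.induce (Set.range fun i : Fin (m + 1) => f i))) :
    G.Adj (f 1) (f 0) ↔ G.Adj (f m) (f 0) := by
  obtain ⟨J, hJ, ⟨a, ha, b, hb, hab, hbm⟩, k, hkm, hk⟩ :=
    exists_isSeqModule_of_not_isPrimeGraph hnp
  have hmJ : m ∈ J := h.mem_of_isSeqModule hJ hab ha hb hbm le_rfl
  obtain ⟨m, rfl⟩ : ∃ m', m = m' + 1 := ⟨m - 1, by omega⟩
  have hlast : G.Adj (f (m + 1)) (f 1) ↔ G.Adj (f (m + 1)) (f 0) :=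
    h.adj_iff_adj le_rfl (by omega) (by omega)
  by_cases h0 : 0 ∈ J
  · have h1 : 1 ∉ J := fun h1 => hk <| by
      rcases k.eq_zero_or_pos with rfl | hk0
      exacts [h0, h.mem_of_isSeqModule hJ one_pos h0 h1 hk0 hkm]
    rw [hJ 1 (by omega) h1 0 h0 (m + 1) hmJ, G.adj_comm, hlast]
  by_cases h1 : 1 ∈ J
  · rw [G.adj_comm, hJ 0 (by omega) h0 1 h1 (m + 1) hmJ, G.adj_comm]
  exfalso
  have hgap : ∀ p, p + 1 < m + 1 → p ∉ J ∧ p + 1 ∉ J := by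
    intro p
    induction p with
    | zero => exact fun _ => ⟨h0, h1⟩
    | succ p ih =>
      intro hp
      obtain ⟨hp0, hp1⟩ := ih (by omega)
      exact ⟨hp1, h.not_mem_add_two_of_isSeqModule hJ hmJ (by omega) hp0 hp1⟩
  obtain ⟨p, rfl⟩ := Nat.exists_eq_add_one_of_ne_zero (show a ≠ 0 by rintro rfl; exact h0 ha)
  exact (hgap p (by omega)).2 ha

lemma exists_isPrimeGraph_skip {n : ℕ} (h : NatChain G I (n + 1) f) (hn : 3 ≤ n) :
    ∃ c ≤ 1, IsPrimeGraph
      (G.induce (Set.range fun i : Fin (n + 1) => f (if (i : ℕ) = 0 then c else i + 1))) := by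
  by_contra! hnp
  have key : ∀ c ≤ 1, G.Adj (f 2) (f c) ↔ G.Adj (f (n + 1)) (f c) := fun c hc => by
    simpa [show n ≠ 0 by omega] using
      (h.skip hc).adj_one_zero_iff_of_not_isPrimeGraph hn (hnp c hc)
  have e0 := key 0 (by omega)
  have e1 := key 1 le_rfl
  have e2 := h.adj_iff 1 0 (by omega) one_pos
  have e3 := h.adj_iff_adj (j := 0) (j' := 1) le_rfl (by omega) (by omega)
  tauto

end NatChain

theorem statement17_general (G : SimpleGraph V) (n : ℕ) (hn : 3 ≤ n)
    (hprime : IsPrimeGraph G)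
    (x y z : V) (hxy : x ≠ y) (hxz : x ≠ z) (hyz : y ≠ z)
    (hnochain : ∀ m ≤ n, ∀ v : Fin (m + 1) → V, ¬ GraphChain G {x, y} z m v) :
    ∃ (I : Set V) (w : V) (v : Fin (n + 1) → V),
      GraphChain G I w n v ∧ IsPrimeGraph (G.induce (Set.range v)) := by
  obtain ⟨m, f, hf, rfl⟩ : z ∈ chainEnd G {x, y} := by
    rw [chainEnd_eq_univ hprime hxy]; trivial
  have hm2 : 2 ≤ m := hf.two_le (by rintro (h | h) <;> simp_all)
  have hm : n + 1 ≤ m := by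
    by_contra! hm
    exact hnochain m (by omega) _ (hf.toGraphChain hm2)
  have hpref := hf.pref hm
  obtain ⟨c, hc, hcprime⟩ := hpref.exists_isPrimeGraph_skip hn
  exact ⟨_, _, _, (hpref.skip hc).toGraphChain (by omega), hcprime⟩

theorem statement17 [Fintype V] (G : SimpleGraph V) (n : ℕ) (hn : 3 ≤ n)
    (hcard : 3 ≤ Fintype.card V) (hprime : IsPrimeGraph G)
    (x y z : V) (hxy : x ≠ y) (hxz : x ≠ z) (hyz : y ≠ z)
    (hnochain : ∀ m ≤ n, ∀ v : Fin (m + 1) → V, ¬ GraphChain G {x, y} z m v) :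
    ∃ (I : Set V) (w : V) (v : Fin (n + 1) → V),
      GraphChain G I w n v ∧ IsPrimeGraph (G.induce (Set.range v)) :=
  statement17_general G n hn hprime x y z hxy hxz hyz hnochain
end
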